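/- arXiv:2503.23256 — 6 statements merged into one kernel-verified Lean document; each statement's English description precedes it below -/
import Mathlib

section
/- For τ > 0, let S_τ = ⋃_{i=1}^d { t·e_i : t ∈ [−τ, τ] } ⊆ ℝ^d be the d-dimensional cross of arm-length τ. Then for every x ∈ ℝ^d with ‖x‖_∞ ≤ τ, one has dist(x, S_τ)² = |x|² − ‖x‖_∞², where ‖x‖_∞ = max_i |x_i| and |x| is the Euclidean norm. -/
lemma dist_single_sq (d : ℕ) (x : EuclideanSpace ℝ (Fin d)) (i : Fin d) (t : ℝ) :
    dist x (EuclideanSpace.single i t) ^ 2 = ‖x‖ ^ 2 - (x i) ^ 2 + (x i - t) ^ 2 := by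
  have hnorm : ‖x‖ ^ 2 = ∑ j, (x j) ^ 2 := by
    rw [EuclideanSpace.norm_eq, Real.sq_sqrt (Finset.sum_nonneg fun j _ => sq_nonneg _)]
    simp [sq_abs]
  have hdist : dist x (EuclideanSpace.single i t) ^ 2
      = ∑ j, (x j - (EuclideanSpace.single i t : EuclideanSpace ℝ (Fin d)) j) ^ 2 := by
    rw [EuclideanSpace.dist_eq, Real.sq_sqrt (Finset.sum_nonneg fun j _ => sq_nonneg _)]
    simp [Real.dist_eq, sq_abs]
  rw [hdist, hnorm]
  rw [← Finset.add_sum_erase _ _ (Finset.mem_univ i),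
      ← Finset.add_sum_erase _ (fun j => (x j) ^ 2) (Finset.mem_univ i)]
  have : ∀ j ∈ Finset.univ.erase i,
      (x j - (EuclideanSpace.single i t : EuclideanSpace ℝ (Fin d)) j) ^ 2 = (x j) ^ 2 := by
    intro j hj
    rw [EuclideanSpace.single_apply, if_neg (Finset.mem_erase.mp hj).1]
    ring
  rw [Finset.sum_congr rfl this, EuclideanSpace.single_apply, if_pos rfl]
  ring

/-- for the d-dimensional cross S_τ of arm-length τ, and any x with
    ‖x‖_∞ ≤ τ, dist(x, S_τ)² = |x|² − ‖x‖_∞². -/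
theorem stmt6 (d : ℕ) (hd : 0 < d) (τ : ℝ) (hτ : 0 < τ)
    (S : Set (EuclideanSpace ℝ (Fin d)))
    (hS : S = {v | ∃ (i : Fin d) (t : ℝ), |t| ≤ τ ∧ v = EuclideanSpace.single i t})
    (x : EuclideanSpace ℝ (Fin d)) (hx : ∀ i, |x i| ≤ τ) :
    Metric.infDist x S ^ 2 = ‖x‖ ^ 2 - (⨆ i, |x i|) ^ 2 := by
  haveI : Nonempty (Fin d) := ⟨⟨0, hd⟩⟩
  obtain ⟨i₀, hi₀⟩ := Finite.exists_max (fun i : Fin d => |x i|)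
  have hM : (⨆ i, |x i|) = |x i₀| :=
    le_antisymm (ciSup_le hi₀) (le_ciSup (Set.Finite.bddAbove (Set.finite_range (fun i => |x i|))) i₀)
  rw [hM]
  set M := |x i₀| with hMdef
  -- the candidate point
  have hmem : EuclideanSpace.single i₀ (x i₀) ∈ S := by
    rw [hS]; exact ⟨i₀, x i₀, hx i₀, rfl⟩
  have hSne : S.Nonempty := ⟨_, hmem⟩
  have hle2 : M ^ 2 ≤ ‖x‖ ^ 2 := by
    have hnorm : ‖x‖ ^ 2 = ∑ j, (x j) ^ 2 := by
      rw [EuclideanSpace.norm_eq, Real.sq_sqrt (Finset.sum_nonneg fun j _ => sq_nonneg _)]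
      simp [sq_abs]
    rw [hnorm, hMdef, sq_abs]
    exact Finset.single_le_sum (fun j _ => sq_nonneg (x j)) (Finset.mem_univ i₀)
  have hnn : 0 ≤ ‖x‖ ^ 2 - M ^ 2 := by linarith
  have hupper : Metric.infDist x S ≤ Real.sqrt (‖x‖ ^ 2 - M ^ 2) := by
    have h := Metric.infDist_le_dist_of_mem (x := x) hmem
    have hd2 : dist x (EuclideanSpace.single i₀ (x i₀)) = Real.sqrt (‖x‖ ^ 2 - M ^ 2) := by
      have := dist_single_sq d x i₀ (x i₀)
      simp only [sub_self, zero_pow, add_zero] at this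
      rw [← Real.sqrt_sq dist_nonneg, this]
      norm_num [hMdef, sq_abs]
    linarith [h, hd2.le, hd2.ge]
  have hlower : Real.sqrt (‖x‖ ^ 2 - M ^ 2) ≤ Metric.infDist x S := by
    rw [← not_lt]
    intro hcon
    obtain ⟨v, hv, hlt⟩ := (Metric.infDist_lt_iff hSne).mp hcon
    rw [hS] at hv
    obtain ⟨i, t, ht, rfl⟩ := hv
    have h1 : ‖x‖ ^ 2 - M ^ 2 ≤ dist x (EuclideanSpace.single i t) ^ 2 := by
      rw [dist_single_sq]
      have : (x i) ^ 2 ≤ M ^ 2 := by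
        rw [← sq_abs (x i)]
        exact pow_le_pow_left₀ (abs_nonneg _) (hi₀ i) 2
      nlinarith [sq_nonneg (x i - t)]
    have hge : Real.sqrt (‖x‖ ^ 2 - M ^ 2) ≤ dist x (EuclideanSpace.single i t) := by
      calc Real.sqrt (‖x‖ ^ 2 - M ^ 2) ≤ Real.sqrt (dist x (EuclideanSpace.single i t) ^ 2) :=
            Real.sqrt_le_sqrt h1
        _ = dist x (EuclideanSpace.single i t) := Real.sqrt_sq dist_nonneg
    exact absurd hlt (not_lt.mpr hge)
  have heq : Metric.infDist x S = Real.sqrt (‖x‖ ^ 2 - M ^ 2) := le_antisymm hupper hlower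
  rw [heq, Real.sq_sqrt hnn]
end

section
/- For τ > 0, let S_τ = ⋃_{i=1}^d { t·e_i : t ∈ [−τ, τ] } ⊆ ℝ^d. Then for every x ∈ ℝ^d, dist(x, S_τ)² = |x|² + ((‖x‖_∞ − τ)₊)² − ‖x‖_∞², and consequently dist(x, S_τ)² ≤ |x|² − 2τ‖x‖_∞ + τ². -/
lemma stmt7_aux (M τ s u : ℝ) (hτ : 0 < τ) (hs : 0 ≤ s) (hsM : s ≤ M) (hu : 0 ≤ u)
    (hus : s - τ ≤ u) : max (M - τ) 0 ^ 2 - M ^ 2 ≤ -s ^ 2 + u ^ 2 := by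
  rcases le_or_gt M τ with hc | hc
  · rw [max_eq_right (by linarith)]
    nlinarith [sq_nonneg u]
  · rw [max_eq_left (by linarith)]
    rcases le_or_gt s τ with hc2 | hc2
    · nlinarith [sq_nonneg u]
    · have h1 : (s - τ) ^ 2 ≤ u ^ 2 := pow_le_pow_left₀ (by linarith) hus 2
      nlinarith [mul_le_mul_of_nonneg_left hsM hτ.le]

/-- for the d-dimensional cross S_τ and any x,
    dist(x, S_τ)² = |x|² + ((‖x‖_∞ − τ)₊)² − ‖x‖_∞², hence
    dist(x, S_τ)² ≤ |x|² − 2τ‖x‖_∞ + τ². -/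
theorem stmt7 (d : ℕ) (hd : 0 < d) (τ : ℝ) (hτ : 0 < τ)
    (S : Set (EuclideanSpace ℝ (Fin d)))
    (hS : S = {v | ∃ (i : Fin d) (t : ℝ), |t| ≤ τ ∧ v = EuclideanSpace.single i t})
    (x : EuclideanSpace ℝ (Fin d)) :
    Metric.infDist x S ^ 2 = ‖x‖ ^ 2 + max ((⨆ i, |x i|) - τ) 0 ^ 2 - (⨆ i, |x i|) ^ 2 ∧
      Metric.infDist x S ^ 2 ≤ ‖x‖ ^ 2 - 2 * τ * (⨆ i, |x i|) + τ ^ 2 := by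
  haveI : Nonempty (Fin d) := ⟨⟨0, hd⟩⟩
  set M := ⨆ i, |x i| with hM
  obtain ⟨i0, hi0⟩ := Finite.exists_max fun i => |x i|
  have hMeq : M = |x i0| :=
    le_antisymm (ciSup_le hi0) (le_ciSup (f := fun j => |x j|) (Set.Finite.bddAbove (Set.finite_range _)) i0)
  have hMge : ∀ j, |x j| ≤ M := fun j => hMeq ▸ hi0 j
  have hM0 : 0 ≤ M := hMeq ▸ abs_nonneg _
  clear_value M
  have hnorm : ‖x‖ ^ 2 = ∑ j, (x j) ^ 2 := by
    rw [EuclideanSpace.norm_eq, Real.sq_sqrt (by positivity)]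
    simp [sq_abs]
  have hM_le_norm : M ^ 2 ≤ ‖x‖ ^ 2 := by
    rw [hnorm, hMeq, sq_abs]
    exact Finset.single_le_sum (f := fun j => (x j)^2) (fun j _ => sq_nonneg _)
      (Finset.mem_univ i0)
  set T := ‖x‖ ^ 2 + max (M - τ) 0 ^ 2 - M ^ 2 with hT
  have hT0 : 0 ≤ T := by nlinarith [sq_nonneg (max (M - τ) 0)]
  clear_value T
  have hdist : ∀ (i : Fin d) (t : ℝ),
      dist x (EuclideanSpace.single i t) ^ 2 = ‖x‖ ^ 2 - (x i) ^ 2 + (x i - t) ^ 2 := by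
    intro i t
    rw [EuclideanSpace.dist_eq, Real.sq_sqrt (by positivity)]
    have h1 : ∀ j, dist (x j) ((EuclideanSpace.single i t : EuclideanSpace ℝ (Fin d)) j) ^ 2
        = (x j) ^ 2 + (if j = i then (x i - t) ^ 2 - (x i) ^ 2 else 0) := by
      intro j
      rcases eq_or_ne j i with rfl | h
      · simp [Real.dist_eq, sq_abs, EuclideanSpace.single_apply]
      · simp [Real.dist_eq, sq_abs, EuclideanSpace.single_apply, h]
    rw [Finset.sum_congr rfl fun j _ => h1 j, Finset.sum_add_distrib,
      Finset.sum_ite_eq' Finset.univ i]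
    simp [hnorm]
    ring
  -- the optimal point
  set t0 : ℝ := max (-τ) (min (x i0) τ) with ht0
  have ht0abs : |t0| ≤ τ := by
    rw [abs_le]
    constructor
    · exact le_max_left _ _
    · exact max_le (by linarith) (min_le_right _ _)
  have hv_mem : EuclideanSpace.single i0 t0 ∈ S := by
    rw [hS]; exact ⟨i0, t0, ht0abs, rfl⟩
  have hopt : (x i0 - t0) ^ 2 = max (M - τ) 0 ^ 2 := by
    rw [hMeq]
    rcases le_or_gt τ (x i0) with h | h
    · have h1 : min (x i0) τ = τ := min_eq_right h
      have h2 : t0 = τ := by rw [ht0, h1]; exact max_eq_right (by linarith)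
      have h3 : |x i0| = x i0 := abs_of_nonneg (by linarith)
      rw [h2, h3, max_eq_left (by linarith)]
    · rcases le_or_gt (-τ) (x i0) with h' | h'
      · have h1 : min (x i0) τ = x i0 := min_eq_left h.le
        have h2 : t0 = x i0 := by rw [ht0, h1]; exact max_eq_right h'
        have h3 : max (|x i0| - τ) 0 = 0 := max_eq_right (by
          rcases abs_cases (x i0) with ⟨he, _⟩ | ⟨he, _⟩ <;> linarith)
        rw [h2, h3]; ring
      · have h1 : min (x i0) τ = x i0 := min_eq_left (by linarith)
        have h2 : t0 = -τ := by rw [ht0, h1]; exact max_eq_left (by linarith)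
        have h3 : |x i0| = -(x i0) := abs_of_neg (by linarith)
        rw [h2, h3, max_eq_left (by linarith)]
        ring
  have hxM : x i0 ^ 2 = M ^ 2 := by rw [hMeq, sq_abs]
  have hvd : dist x (EuclideanSpace.single i0 t0) ^ 2 = T := by
    rw [hdist, hopt, hT]
    linarith
  have hSne : S.Nonempty := ⟨_, hv_mem⟩
  -- lower bound
  have hpt : ∀ y ∈ S, T ≤ dist x y ^ 2 := by
    intro y hy
    rw [hS] at hy
    obtain ⟨i, t, ht, rfl⟩ := hy
    rw [hdist, hT]
    have habs : |x i| - τ ≤ |x i - t| := by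
      have h1 := abs_sub_abs_le_abs_sub (x i) t
      linarith
    have h := stmt7_aux M τ (|x i|) (|x i - t|) hτ (abs_nonneg _) (hMge i)
      (abs_nonneg _) habs
    rw [sq_abs, sq_abs] at h
    linarith
  have hlow : Real.sqrt T ≤ Metric.infDist x S := by
    by_contra h
    push_neg at h
    obtain ⟨y, hy, hlt⟩ := (Metric.infDist_lt_iff hSne).mp h
    have h1 := hpt y hy
    have h2 : Real.sqrt T ≤ dist x y := by
      have := Real.sqrt_le_sqrt h1
      rwa [Real.sqrt_sq dist_nonneg] at this
    linarith
  have hkey : Metric.infDist x S ^ 2 = T := by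
    have hup : Metric.infDist x S ≤ Real.sqrt T := by
      have := Metric.infDist_le_dist_of_mem (x := x) hv_mem
      have h2 : dist x (EuclideanSpace.single i0 t0) = Real.sqrt T := by
        rw [← hvd, Real.sqrt_sq dist_nonneg]
      linarith
    have : Metric.infDist x S = Real.sqrt T := le_antisymm hup hlow
    rw [this, Real.sq_sqrt hT0]
  refine ⟨hkey, ?_⟩
  rw [hkey, hT]
  rcases le_or_gt M τ with hc | hc
  · rw [max_eq_right (by linarith)]
    nlinarith [sq_nonneg (τ - M)]
  · rw [max_eq_left (by linarith)]
    nlinarith [sq_nonneg (M - τ)]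
end

section
/- Let Σ ⊆ ℝ^d be compact and nonempty, let π : ℝ^d → Σ satisfy |x − π(x)| = dist(x, Σ) for all x, and fix ε ∈ (0,1) and τ > 0. Let Σ* = (1−ε)Σ ∪ S_τ, where S_τ is the d-dimensional cross of arm-length τ centered at the origin. Then for all x ∈ ℝ^d, dist(x, Σ)² − dist(x, Σ*)² ≥ max( −2ε π(x)·(x − π(x)) − ε²|π(x)|², −2 π(x)·(x − π(x)) − |π(x)|² + 2τ‖x‖_∞ − τ² ). -/
open Pointwise

/-- the key pointwise lower bound for
    dist(x, Σ)² − dist(x, Σ*)², where Σ* = (1−ε)Σ ∪ S_τ. -/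
theorem stmt8 (d : ℕ) (hd : 0 < d) (S : Set (EuclideanSpace ℝ (Fin d)))
    (hne : S.Nonempty) (hc : IsCompact S)
    (π : EuclideanSpace ℝ (Fin d) → EuclideanSpace ℝ (Fin d))
    (hπ : ∀ x, π x ∈ S ∧ dist x (π x) = Metric.infDist x S)
    (ε τ : ℝ) (hε : ε ∈ Set.Ioo (0 : ℝ) 1) (hτ : 0 < τ)
    (Scross Sstar : Set (EuclideanSpace ℝ (Fin d)))
    (hcross : Scross = {v | ∃ (i : Fin d) (t : ℝ), |t| ≤ τ ∧ v = EuclideanSpace.single i t})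
    (hstar : Sstar = (1 - ε) • S ∪ Scross)
    (x : EuclideanSpace ℝ (Fin d)) :
    Metric.infDist x S ^ 2 - Metric.infDist x Sstar ^ 2 ≥
      max (-2 * ε * (inner ℝ (π x) (x - π x) : ℝ) - ε ^ 2 * ‖π x‖ ^ 2)
        (-2 * (inner ℝ (π x) (x - π x) : ℝ) - ‖π x‖ ^ 2 + 2 * τ * (⨆ i, |x i|) - τ ^ 2) := by
  haveI : Nonempty (Fin d) := Fin.pos_iff_nonempty.mp hd
  obtain ⟨hmem, hdist⟩ := hπ x
  set p := π x with hp
  have hdS : Metric.infDist x S = ‖x - p‖ := by rw [← hdist, dist_eq_norm]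
  rw [ge_iff_le, max_le_iff]
  constructor
  · have hy : (1 - ε) • p ∈ Sstar := by
      rw [hstar]; left; exact ⟨p, hmem, rfl⟩
    have h1 : Metric.infDist x Sstar ^ 2 ≤ ‖x - (1 - ε) • p‖ ^ 2 := by
      have h := Metric.infDist_le_dist_of_mem (x := x) hy
      rw [dist_eq_norm] at h
      exact pow_le_pow_left₀ Metric.infDist_nonneg h 2
    have hexp : ‖x - (1 - ε) • p‖ ^ 2
        = ‖x - p‖ ^ 2 + 2 * (ε * (inner ℝ (x - p) p : ℝ)) + ε ^ 2 * ‖p‖ ^ 2 := by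
      have he : x - (1 - ε) • p = (x - p) + ε • p := by
        rw [sub_smul, one_smul]; abel
      rw [he, norm_add_sq_real, real_inner_smul_right, norm_smul,
        Real.norm_eq_abs, mul_pow, sq_abs]
    rw [real_inner_comm p (x - p)] at hexp
    rw [hdS]
    linarith [h1, hexp]
  · obtain ⟨i, hi⟩ := Finite.exists_max (fun j : Fin d => |x j|)
    have hsup : (⨆ j, |x j|) = |x i| :=
      le_antisymm (ciSup_le hi) (le_ciSup (f := fun j => |x j|) (Set.Finite.bddAbove (Set.finite_range _)) i)
    set t : ℝ := if 0 ≤ x i then τ else -τ with ht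
    have habs : |t| ≤ τ := by
      rw [ht]; split_ifs <;> simp [abs_of_pos hτ, hτ.le]
    have htx : t * x i = τ * |x i| := by
      rw [ht]; split_ifs with h
      · rw [abs_of_nonneg h]
      · rw [abs_of_neg (lt_of_not_ge h)]; ring
    have ht2 : t ^ 2 = τ ^ 2 := by rw [ht]; split_ifs <;> ring
    have hv : EuclideanSpace.single i t ∈ Sstar := by
      rw [hstar]; right; rw [hcross]; exact ⟨i, t, habs, rfl⟩
    have h1 : Metric.infDist x Sstar ^ 2 ≤ ‖x - EuclideanSpace.single i t‖ ^ 2 := by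
      have h := Metric.infDist_le_dist_of_mem (x := x) hv
      rw [dist_eq_norm] at h
      exact pow_le_pow_left₀ Metric.infDist_nonneg h 2
    have hexp : ‖x - EuclideanSpace.single i t‖ ^ 2
        = ‖x‖ ^ 2 - 2 * (τ * |x i|) + τ ^ 2 := by
      rw [norm_sub_sq_real, EuclideanSpace.inner_single_right,
        EuclideanSpace.norm_single]
      simp only [RCLike.conj_to_real]
      rw [Real.norm_eq_abs, sq_abs, ht2]
      linarith [htx]
    have hexp2 : ‖x - p‖ ^ 2 = ‖x‖ ^ 2 - 2 * (inner ℝ x p : ℝ) + ‖p‖ ^ 2 :=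
      norm_sub_sq_real x p
    have hinner : (inner ℝ p (x - p) : ℝ) = (inner ℝ x p : ℝ) - ‖p‖ ^ 2 := by
      rw [inner_sub_right, real_inner_self_eq_norm_sq, real_inner_comm]
    rw [hdS, hsup]
    nlinarith [h1, hexp, hexp2, hinner]
end

section
/- Let μ be a compactly supported Borel probability measure on ℝ^d, Σ ⊆ ℝ^d compact nonempty, π a measurable closest-point projection onto Σ, p ≥ 1, and ξ : Σ → ℝ^d continuous. For ε > 0 let Σ_ε = { σ + ε ξ(σ) : σ ∈ Σ }. If p > 1, or p = 1 and μ(Σ) = 0, then limsup_{ε→0⁺} (J_p(Σ_ε) − J_p(Σ))/ε ≤ −∫_{ℝ^d} p·ξ(π(x))·(x − π(x))·|x − π(x)|^(p−2) dμ(x), with the convention that the integrand is 0 when x = π(x) and p > 1. -/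
open MeasureTheory Filter Metric Topology

section Aux

variable {E : Type*} [NormedAddCommGroup E] [InnerProductSpace ℝ E]

lemma aux_hasDerivAt (v w : E) {p : ℝ} (h : v ≠ 0 ∨ 1 < p) :
    HasDerivAt (fun ε : ℝ => ‖v - ε • w‖ ^ p)
      (-(p * (inner ℝ w v : ℝ) * ‖v‖ ^ (p - 2))) 0 := by
  have hline : HasDerivAt (fun ε : ℝ => v - ε • w) (-w) 0 := by
    simpa using ((hasDerivAt_id (0:ℝ)).smul_const w).const_sub v
  rcases h with hv | hp1
  · have hvpos : (0:ℝ) < ‖v‖ := norm_pos_iff.mpr hv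
    have hsq : HasDerivAt (fun ε : ℝ => ‖v - ε • w‖ ^ 2)
        (2 * (inner ℝ (v - (0:ℝ) • w) (-w) : ℝ)) 0 := hline.norm_sq
    have hsq' : HasDerivAt (fun ε : ℝ => ‖v - ε • w‖ ^ 2)
        (-(2 * (inner ℝ w v : ℝ))) 0 := by
      convert hsq using 1
      simp [real_inner_comm, inner_neg_right]
    have hne : (‖v - (0:ℝ) • w‖ ^ 2 : ℝ) ≠ 0 := by simp [hv]
    have hrpow := (Real.hasDerivAt_rpow_const (x := ‖v - (0:ℝ) • w‖ ^ 2)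
      (p := p / 2) (Or.inl hne)).comp 0 hsq'
    have key : ∀ u : E, (‖u‖ ^ 2 : ℝ) ^ (p / 2) = ‖u‖ ^ p := by
      intro u
      rw [← Real.rpow_natCast ‖u‖ 2, ← Real.rpow_mul (norm_nonneg u)]
      norm_num
      congr 1
      ring
    have h2 : (‖v‖ ^ 2 : ℝ) ^ (p / 2 - 1) = ‖v‖ ^ (p - 2) := by
      rw [← Real.rpow_natCast ‖v‖ 2, ← Real.rpow_mul (norm_nonneg v)]
      norm_num
      congr 1
      ring
    convert hrpow using 1
    · rfl
    · rfl
    · funext ε; exact (key _).symm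
    · simp only [zero_smul, sub_zero] at *
      rw [h2]; ring
  · have := ((hasFDerivAt_norm_rpow (v - (0:ℝ) • w) hp1).comp_hasDerivAt 0 hline)
    simp only [zero_smul, sub_zero] at this
    convert this using 1
    · rfl
    · rfl
    · rfl
    simp [innerSL_apply_apply, inner_neg_right, real_inner_comm]
    ring

lemma aux_lip {p : ℝ} (hp : 1 ≤ p) {R a b : ℝ} (ha : a ∈ Set.Icc 0 R) (hb : b ∈ Set.Icc 0 R) :
    |a ^ p - b ^ p| ≤ p * R ^ (p - 1) * |a - b| := by
  have hp0 : (0:ℝ) ≤ p := by linarith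
  have hderiv : ∀ x ∈ Set.Icc (0:ℝ) R,
      HasDerivWithinAt (fun t : ℝ => t ^ p) (p * x ^ (p-1)) (Set.Icc 0 R) x := fun x _ =>
    (Real.hasDerivAt_rpow_const (Or.inr hp)).hasDerivWithinAt
  have hbound : ∀ x ∈ Set.Icc (0:ℝ) R, ‖p * x ^ (p-1)‖ ≤ p * R ^ (p-1) := by
    intro x hx
    rw [Real.norm_eq_abs, abs_mul, abs_of_nonneg hp0,
      abs_of_nonneg (Real.rpow_nonneg hx.1 _)]
    exact mul_le_mul_of_nonneg_left (Real.rpow_le_rpow hx.1 hx.2 (by linarith)) hp0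
  have := (convex_Icc (0:ℝ) R).norm_image_sub_le_of_norm_hasDerivWithin_le hderiv hbound hb ha
  simpa [Real.norm_eq_abs] using this

end Aux

/-- first-variation upper bound for J_p under a continuous
    perturbation Σ_ε = (1 + εξ)(Σ), expressed via the barycentre-field integrand. -/
theorem stmt13 (d : ℕ) (μ : Measure (EuclideanSpace ℝ (Fin d))) [IsProbabilityMeasure μ]
    (hcs : ∃ K : Set (EuclideanSpace ℝ (Fin d)), IsCompact K ∧ μ Kᶜ = 0)
    (S : Set (EuclideanSpace ℝ (Fin d))) (hne : S.Nonempty) (hc : IsCompact S)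
    (π : EuclideanSpace ℝ (Fin d) → EuclideanSpace ℝ (Fin d)) (hπm : Measurable π)
    (hπ : ∀ x, π x ∈ S ∧ dist x (π x) = Metric.infDist x S)
    (p : ℝ) (hp : 1 ≤ p) (hp' : 1 < p ∨ (p = 1 ∧ μ S = 0))
    (ξ : EuclideanSpace ℝ (Fin d) → EuclideanSpace ℝ (Fin d)) (hξ : ContinuousOn ξ S) :
    limsup (fun ε : ℝ =>
        ((∫ x, Metric.infDist x ((fun σ => σ + ε • ξ σ) '' S) ^ p ∂μ) -
          ∫ x, Metric.infDist x S ^ p ∂μ) / ε) (nhdsWithin 0 (Set.Ioi 0)) ≤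
      -∫ x, p * (inner ℝ (ξ (π x)) (x - π x) : ℝ) * ‖x - π x‖ ^ (p - 2) ∂μ := by
  obtain ⟨K, hK, hKc⟩ := hcs
  have hp0 : (0:ℝ) < p := by linarith
  have hKae : ∀ᵐ x ∂μ, x ∈ K := by
    rw [MeasureTheory.ae_iff]
    exact hKc
  -- bounds
  obtain ⟨RK, hRK⟩ := hK.isBounded.subset_closedBall 0
  obtain ⟨RS, hRS⟩ := hc.isBounded.subset_closedBall 0
  obtain ⟨M0, hM0⟩ := (hc.image_of_continuousOn hξ).isBounded.subset_closedBall 0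
  set M : ℝ := max M0 0 with hMdef
  have hM0' : (0:ℝ) ≤ M := le_max_right _ _
  have hM : ∀ σ ∈ S, ‖ξ σ‖ ≤ M := by
    intro σ hσ
    have := hM0 (Set.mem_image_of_mem ξ hσ)
    rw [Metric.mem_closedBall, dist_zero_right] at this
    exact this.trans (le_max_left _ _)
  set R : ℝ := max RK 0 + max RS 0 + M with hRdef
  have hR0 : (0:ℝ) ≤ R := by positivity
  -- basic functions
  set v : EuclideanSpace ℝ (Fin d) → EuclideanSpace ℝ (Fin d) := fun x => x - π x with hvdef
  set w : EuclideanSpace ℝ (Fin d) → EuclideanSpace ℝ (Fin d) := fun x => ξ (π x) with hwdef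
  have hnv : ∀ x, ‖v x‖ = Metric.infDist x S := by
    intro x; rw [← dist_eq_norm]; exact (hπ x).2
  have hwM : ∀ x, ‖w x‖ ≤ M := fun x => hM _ (hπ x).1
  have hwmeas : Measurable w := by
    have h1 : Continuous (S.restrict ξ) := hξ.restrict
    exact h1.measurable.comp (hπm.subtype_mk (h := fun x => (hπ x).1))
  have hvmeas : Measurable v := measurable_id.sub hπm
  have hvK : ∀ x ∈ K, ‖v x‖ ≤ max RK 0 + max RS 0 := by
    intro x hx
    have h1 : ‖x‖ ≤ RK := by
      have := hRK hx; rwa [Metric.mem_closedBall, dist_zero_right] at this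
    have h2 : ‖π x‖ ≤ RS := by
      have := hRS (hπ x).1; rwa [Metric.mem_closedBall, dist_zero_right] at this
    calc ‖x - π x‖ ≤ ‖x‖ + ‖π x‖ := norm_sub_le _ _
    _ ≤ max RK 0 + max RS 0 := by
        gcongr
        exacts [h1.trans (le_max_left _ _), h2.trans (le_max_left _ _)]
  -- measurability / integrability of the comparison functions
  have hmeas1 : ∀ ε : ℝ, AEStronglyMeasurable (fun x => ‖v x - ε • w x‖ ^ p) μ := by
    intro ε
    exact ((Real.continuous_rpow_const (le_of_lt hp0)).measurable.comp
      ((hvmeas.sub (hwmeas.const_smul ε)).norm)).aestronglyMeasurable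
  have hint1 : ∀ ε : ℝ, |ε| ≤ 1 → Integrable (fun x => ‖v x - ε • w x‖ ^ p) μ := by
    intro ε hε
    refine Integrable.mono' (integrable_const (R ^ p)) (hmeas1 ε) ?_
    filter_upwards [hKae] with x hx
    rw [Real.norm_eq_abs, abs_of_nonneg (Real.rpow_nonneg (norm_nonneg _) _)]
    refine Real.rpow_le_rpow (norm_nonneg _) ?_ (le_of_lt hp0)
    calc ‖v x - ε • w x‖ ≤ ‖v x‖ + ‖ε • w x‖ := norm_sub_le _ _
    _ ≤ (max RK 0 + max RS 0) + M := by
        refine add_le_add (hvK x hx) ?_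
        rw [norm_smul, Real.norm_eq_abs]
        calc |ε| * ‖w x‖ ≤ 1 * M := by
              exact mul_le_mul hε (hwM x) (norm_nonneg _) zero_le_one
        _ = M := one_mul M
    _ = R := rfl
  have hint0 : Integrable (fun x => ‖v x‖ ^ p) μ := by
    have := hint1 0 (by norm_num)
    simpa using this
  have hintb : Integrable (fun x => Metric.infDist x S ^ p) μ := by
    refine hint0.congr (Eventually.of_forall fun x => ?_)
    simp only [hnv]
  -- perturbed sets
  have hTub : ∀ (ε : ℝ), 0 ≤ ε → ∀ x,
      Metric.infDist x ((fun σ => σ + ε • ξ σ) '' S) ≤ ‖v x - ε • w x‖ := by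
    intro ε hε x
    have hmem : π x + ε • ξ (π x) ∈ (fun σ => σ + ε • ξ σ) '' S :=
      Set.mem_image_of_mem _ (hπ x).1
    have := Metric.infDist_le_dist_of_mem (x := x) hmem
    rwa [dist_eq_norm, show x - (π x + ε • ξ (π x)) = v x - ε • w x by
      simp only [hvdef, hwdef]; abel] at this
  have hTabove : ∀ (ε : ℝ), 0 ≤ ε → ∀ x,
      Metric.infDist x ((fun σ => σ + ε • ξ σ) '' S) ≤ Metric.infDist x S + ε * M := by
    intro ε hε x
    calc Metric.infDist x ((fun σ => σ + ε • ξ σ) '' S) ≤ ‖v x - ε • w x‖ := hTub ε hε x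
    _ ≤ ‖v x‖ + ‖ε • w x‖ := norm_sub_le _ _
    _ ≤ Metric.infDist x S + ε * M := by
        rw [hnv x]
        refine add_le_add le_rfl ?_
        rw [norm_smul, Real.norm_eq_abs, abs_of_nonneg hε]
        exact mul_le_mul_of_nonneg_left (hwM x) hε
  have hTbelow : ∀ (ε : ℝ), 0 ≤ ε → ∀ x,
      Metric.infDist x S - ε * M ≤ Metric.infDist x ((fun σ => σ + ε • ξ σ) '' S) := by
    intro ε hε x
    have hTc : IsCompact ((fun σ => σ + ε • ξ σ) '' S) :=
      hc.image_of_continuousOn (continuousOn_id.add (hξ.const_smul ε))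
    obtain ⟨y, hy, hyd⟩ := hTc.exists_infDist_eq_dist (hne.image _) x
    obtain ⟨σ, hσ, rfl⟩ := hy
    have h1 : Metric.infDist x S ≤ dist x σ := Metric.infDist_le_dist_of_mem hσ
    have h2 : dist x σ ≤ dist x (σ + ε • ξ σ) + ε * M := by
      calc dist x σ ≤ dist x (σ + ε • ξ σ) + dist (σ + ε • ξ σ) σ := dist_triangle _ _ _
      _ ≤ dist x (σ + ε • ξ σ) + ε * M := by
          refine add_le_add le_rfl ?_
          rw [dist_eq_norm, show σ + ε • ξ σ - σ = ε • ξ σ by abel, norm_smul,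
            Real.norm_eq_abs, abs_of_nonneg hε]
          exact mul_le_mul_of_nonneg_left (hM σ hσ) hε
    rw [hyd]
    linarith
  -- ranges on K
  have hbR : ∀ x ∈ K, Metric.infDist x S ∈ Set.Icc (0:ℝ) R := by
    intro x hx
    refine ⟨Metric.infDist_nonneg, ?_⟩
    rw [← hnv x]
    calc ‖v x‖ ≤ max RK 0 + max RS 0 := hvK x hx
    _ ≤ R := by rw [hRdef]; linarith
  have haR : ∀ (ε : ℝ), ε ∈ Set.Ioc (0:ℝ) 1 → ∀ x ∈ K,
      Metric.infDist x ((fun σ => σ + ε • ξ σ) '' S) ∈ Set.Icc (0:ℝ) R := by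
    intro ε hε x hx
    refine ⟨Metric.infDist_nonneg, ?_⟩
    calc Metric.infDist x ((fun σ => σ + ε • ξ σ) '' S)
        ≤ Metric.infDist x S + ε * M := hTabove ε hε.1.le x
    _ ≤ (max RK 0 + max RS 0) + 1 * M := by
        refine add_le_add (by rw [← hnv x]; exact hvK x hx) ?_
        exact mul_le_mul_of_nonneg_right hε.2 hM0'
    _ = R := by rw [hRdef]; ring
  have hintT : ∀ (ε : ℝ), ε ∈ Set.Ioc (0:ℝ) 1 →
      Integrable (fun x => Metric.infDist x ((fun σ => σ + ε • ξ σ) '' S) ^ p) μ := by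
    intro ε hε
    refine Integrable.mono' (integrable_const (R ^ p))
      (((continuous_infDist_pt _).rpow_const (fun x => Or.inr hp0.le)).aestronglyMeasurable) ?_
    filter_upwards [hKae] with x hx
    rw [Real.norm_eq_abs, abs_of_nonneg (Real.rpow_nonneg Metric.infDist_nonneg _)]
    exact Real.rpow_le_rpow Metric.infDist_nonneg (haR ε hε x hx).2 hp0.le
  -- Step 1: upper comparison with the directional difference quotient
  have hub : ∀ ε : ℝ, ε ∈ Set.Ioc (0:ℝ) 1 →
      ((∫ x, Metric.infDist x ((fun σ => σ + ε • ξ σ) '' S) ^ p ∂μ) -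
        ∫ x, Metric.infDist x S ^ p ∂μ) / ε ≤
      ∫ x, (‖v x - ε • w x‖ ^ p - ‖v x‖ ^ p) / ε ∂μ := by
    intro ε hε
    have hε1 : |ε| ≤ 1 := by rw [abs_of_pos hε.1]; exact hε.2
    have hJle : (∫ x, Metric.infDist x ((fun σ => σ + ε • ξ σ) '' S) ^ p ∂μ) ≤
        ∫ x, ‖v x - ε • w x‖ ^ p ∂μ :=
      integral_mono (hintT ε hε) (hint1 ε hε1) (fun x =>
        Real.rpow_le_rpow Metric.infDist_nonneg (hTub ε hε.1.le x) hp0.le)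
    have hJ0 : (∫ x, Metric.infDist x S ^ p ∂μ) = ∫ x, ‖v x‖ ^ p ∂μ :=
      integral_congr_ae (Eventually.of_forall fun x => by simp only [hnv])
    rw [integral_div, integral_sub (hint1 ε hε1) hint0, hJ0]
    have hε0 := hε.1
    gcongr
  -- Step 2: uniform lower bound for the difference quotients
  have hlb : ∀ ε : ℝ, ε ∈ Set.Ioc (0:ℝ) 1 →
      -(p * R ^ (p-1) * M) ≤
      ((∫ x, Metric.infDist x ((fun σ => σ + ε • ξ σ) '' S) ^ p ∂μ) -
        ∫ x, Metric.infDist x S ^ p ∂μ) / ε := by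
    intro ε hε
    have hkey : (fun _ : EuclideanSpace ℝ (Fin d) => -(p * R ^ (p-1) * M * ε)) ≤ᵐ[μ]
        (fun x => Metric.infDist x ((fun σ => σ + ε • ξ σ) '' S) ^ p
          - Metric.infDist x S ^ p) := by
      filter_upwards [hKae] with x hx
      have hlip := aux_lip hp (haR ε hε x hx) (hbR x hx)
      have habs : |Metric.infDist x ((fun σ => σ + ε • ξ σ) '' S) - Metric.infDist x S|
          ≤ ε * M := by
        rw [abs_sub_le_iff]
        constructor
        · have := hTabove ε hε.1.le x; linarith
        · have := hTbelow ε hε.1.le x; linarith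
      have hRp : (0:ℝ) ≤ p * R ^ (p-1) := by positivity
      have h2 : |Metric.infDist x ((fun σ => σ + ε • ξ σ) '' S) ^ p
          - Metric.infDist x S ^ p| ≤ p * R ^ (p-1) * M * ε := by
        calc _ ≤ p * R ^ (p-1) * |Metric.infDist x ((fun σ => σ + ε • ξ σ) '' S)
              - Metric.infDist x S| := hlip
        _ ≤ p * R ^ (p-1) * (ε * M) := mul_le_mul_of_nonneg_left habs hRp
        _ = p * R ^ (p-1) * M * ε := by ring
      have := neg_abs_le (Metric.infDist x ((fun σ => σ + ε • ξ σ) '' S) ^ p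
          - Metric.infDist x S ^ p)
      linarith
    have hmono := integral_mono_ae (integrable_const _) ((hintT ε hε).sub hintb) hkey
    rw [integral_const] at hmono
    simp only [Pi.sub_apply] at hmono
    simp only [probReal_univ, ENNReal.toReal_one, one_smul] at hmono
    rw [integral_sub (hintT ε hε) hintb] at hmono
    rw [le_div_iff₀ hε.1]
    linarith
  -- Step 3: dominated convergence for the difference quotients
  have hmeas0 : AEStronglyMeasurable (fun x => ‖v x‖ ^ p) μ := hint0.aestronglyMeasurable
  have hvS : ∀ᵐ x ∂μ, (v x ≠ 0 ∨ 1 < p) := by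
    rcases hp' with h1 | ⟨hp1, hS0⟩
    · exact Eventually.of_forall (fun x => Or.inr h1)
    · have hae : ∀ᵐ x ∂μ, x ∉ S := by
        rw [MeasureTheory.ae_iff]
        simpa [Set.setOf_mem_eq] using hS0
      filter_upwards [hae] with x hx
      left
      intro hvx
      apply hx
      have hxπ : x = π x := by
        have : x - π x = 0 := hvx
        rwa [sub_eq_zero] at this
      rw [hxπ]; exact (hπ x).1
  have hG : Tendsto (fun ε : ℝ => ∫ x, (‖v x - ε • w x‖ ^ p - ‖v x‖ ^ p) / ε ∂μ)
      (nhdsWithin 0 (Set.Ioi 0))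
      (𝓝 (∫ x, -(p * (inner ℝ (w x) (v x) : ℝ) * ‖v x‖ ^ (p - 2)) ∂μ)) := by
    refine tendsto_integral_filter_of_dominated_convergence
      (fun _ => p * R ^ (p-1) * M) ?_ ?_ (integrable_const _) ?_
    · refine Eventually.of_forall (fun ε => ?_)
      refine (((hmeas1 ε).sub hmeas0).mul_const ε⁻¹).congr
        (Eventually.of_forall fun x => ?_)
      simp [div_eq_mul_inv]
    · filter_upwards [Ioc_mem_nhdsGT (zero_lt_one (α := ℝ))] with ε hε
      filter_upwards [hKae] with x hx
      have hε1 : |ε| ≤ 1 := by rw [abs_of_pos hε.1]; exact hε.2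
      have h1 : ‖v x - ε • w x‖ ∈ Set.Icc (0:ℝ) R := by
        refine ⟨norm_nonneg _, ?_⟩
        calc ‖v x - ε • w x‖ ≤ ‖v x‖ + ‖ε • w x‖ := norm_sub_le _ _
        _ ≤ (max RK 0 + max RS 0) + M := by
            refine add_le_add (hvK x hx) ?_
            rw [norm_smul, Real.norm_eq_abs]
            calc |ε| * ‖w x‖ ≤ 1 * M := mul_le_mul hε1 (hwM x) (norm_nonneg _) zero_le_one
            _ = M := one_mul M
        _ = R := rfl
      have h2 : ‖v x‖ ∈ Set.Icc (0:ℝ) R := by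
        refine ⟨norm_nonneg _, ?_⟩
        calc ‖v x‖ ≤ max RK 0 + max RS 0 := hvK x hx
        _ ≤ R := by rw [hRdef]; linarith
      have hlip := aux_lip hp h1 h2
      have habs : |‖v x - ε • w x‖ - ‖v x‖| ≤ ε * M := by
        calc |‖v x - ε • w x‖ - ‖v x‖| ≤ ‖(v x - ε • w x) - v x‖ := abs_norm_sub_norm_le _ _
        _ = ‖ε • w x‖ := by rw [show v x - ε • w x - v x = -(ε • w x) by abel, norm_neg]
        _ ≤ ε * M := by
            rw [norm_smul, Real.norm_eq_abs, abs_of_pos hε.1]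
            exact mul_le_mul_of_nonneg_left (hwM x) hε.1.le
      have hRp : (0:ℝ) ≤ p * R ^ (p-1) := by positivity
      rw [Real.norm_eq_abs, abs_div, abs_of_pos hε.1, div_le_iff₀ hε.1]
      calc |‖v x - ε • w x‖ ^ p - ‖v x‖ ^ p|
          ≤ p * R ^ (p-1) * |‖v x - ε • w x‖ - ‖v x‖| := hlip
      _ ≤ p * R ^ (p-1) * (ε * M) := mul_le_mul_of_nonneg_left habs hRp
      _ = p * R ^ (p-1) * M * ε := by ring
    · filter_upwards [hvS] with x hx
      have hd := aux_hasDerivAt (v x) (w x) (p := p) hx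
      have ht := hasDerivAt_iff_tendsto_slope.mp hd
      have h2 := ht.mono_left (nhdsWithin_mono (0:ℝ)
        (fun y hy => Set.mem_compl_singleton_iff.mpr (ne_of_gt hy)))
      refine h2.congr (fun ε => ?_)
      rw [slope_def_field]
      simp [div_eq_mul_inv]
  -- conclude
  have hcob : IsCoboundedUnder (· ≤ ·) (nhdsWithin (0:ℝ) (Set.Ioi 0))
      (fun ε : ℝ =>
        ((∫ x, Metric.infDist x ((fun σ => σ + ε • ξ σ) '' S) ^ p ∂μ) -
          ∫ x, Metric.infDist x S ^ p ∂μ) / ε) := by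
    refine isCoboundedUnder_le_of_eventually_le _ (x := -(p * R ^ (p-1) * M)) ?_
    filter_upwards [Ioc_mem_nhdsGT (zero_lt_one (α := ℝ))] with ε hε
    exact hlb ε hε
  have hfinal := limsup_le_limsup
    (by filter_upwards [Ioc_mem_nhdsGT (zero_lt_one (α := ℝ))] with ε hε
        exact hub ε hε)
    hcob hG.isBoundedUnder_le
  rw [hG.limsup_eq] at hfinal
  rw [← integral_neg]
  simp only [hvdef, hwdef] at hfinal
  exact hfinal
end

section
/- Let μ be a compactly supported Borel probability measure on ℝ^d, let p > 1, let Σ ⊆ ℝ^d be compact nonempty with closest-point projection π, and define the net barycentre vector B = p·∫_{ℝ^d} |x − π(x)|^(p−2)·(x − π(x)) dμ(x) (integrand 0 when x = π(x)). Then for Σ_ε = Σ + εB (translation by εB), limsup_{ε→0⁺} (J_p(Σ_ε) − J_p(Σ))/ε ≤ −|B|². -/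
open MeasureTheory Filter Pointwise

open Metric Real Set in
private lemma rpow_sub_rpow_le_aux {p M a b : ℝ} (hp : 1 < p) (hb : 0 ≤ b) (hba : b ≤ a)
    (haM : a ≤ M) : a ^ p - b ^ p ≤ p * M ^ (p - 1) * (a - b) := by
  rcases eq_or_lt_of_le hba with rfl | h
  · simp
  · have hcont : ContinuousOn (fun t : ℝ => t ^ p) (Icc b a) := fun t _ =>
      (Real.continuousAt_rpow_const t p (Or.inr (by linarith))).continuousWithinAt
    have hderiv : ∀ t ∈ Ioo b a, HasDerivAt (fun t : ℝ => t ^ p) (p * t ^ (p - 1)) t :=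
      fun t _ => Real.hasDerivAt_rpow_const (Or.inr hp.le)
    obtain ⟨c, hc, hcs⟩ := exists_hasDerivAt_eq_slope (fun t : ℝ => t ^ p)
      (fun t => p * t ^ (p - 1)) h hcont hderiv
    have hc0 : 0 ≤ c := le_of_lt (lt_of_le_of_lt hb hc.1)
    have hcM : c ≤ M := le_trans hc.2.le haM
    have hab : (0:ℝ) < a - b := by linarith
    have h1 : a ^ p - b ^ p = p * c ^ (p - 1) * (a - b) := by
      rw [hcs]
      field_simp
    rw [h1]
    have h2 : c ^ (p - 1) ≤ M ^ (p - 1) := Real.rpow_le_rpow hc0 hcM (by linarith)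
    have hp0 : (0:ℝ) < p := by linarith
    exact mul_le_mul_of_nonneg_right (mul_le_mul_of_nonneg_left h2 hp0.le) hab.le

/-- translating Σ along the net barycentre vector B decreases J_p
    at first order by at least |B|². -/
theorem stmt14 (d : ℕ) (μ : Measure (EuclideanSpace ℝ (Fin d))) [IsProbabilityMeasure μ]
    (hcs : ∃ K : Set (EuclideanSpace ℝ (Fin d)), IsCompact K ∧ μ Kᶜ = 0)
    (p : ℝ) (hp : 1 < p)
    (S : Set (EuclideanSpace ℝ (Fin d))) (hne : S.Nonempty) (hc : IsCompact S)
    (π : EuclideanSpace ℝ (Fin d) → EuclideanSpace ℝ (Fin d)) (hπm : Measurable π)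
    (hπ : ∀ x, π x ∈ S ∧ dist x (π x) = Metric.infDist x S)
    (B : EuclideanSpace ℝ (Fin d))
    (hB : B = p • ∫ x, ‖x - π x‖ ^ (p - 2) • (x - π x) ∂μ) :
    limsup (fun ε : ℝ =>
        ((∫ x, Metric.infDist x ((fun σ => σ + ε • B) '' S) ^ p ∂μ) -
          ∫ x, Metric.infDist x S ^ p ∂μ) / ε) (nhdsWithin 0 (Set.Ioi 0)) ≤
      -‖B‖ ^ 2 := by
  classical
  obtain ⟨K, hK, hKc⟩ := hcs
  have hp0 : (0:ℝ) < p := by linarith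
  have hd : ∀ x : EuclideanSpace ℝ (Fin d), Metric.infDist x S = ‖x - π x‖ := fun x =>
    ((hπ x).2).symm.trans (dist_eq_norm x (π x))
  obtain ⟨r, hr⟩ := (hK.union hc).isBounded.subset_closedBall 0
  set R : ℝ := 2 * max r 0 with hRdef
  have hR0 : 0 ≤ R := by positivity
  have haeK : ∀ᵐ x ∂μ, x ∈ K := MeasureTheory.mem_ae_iff.mpr hKc
  have hvR : ∀ x ∈ K, ‖x - π x‖ ≤ R := by
    intro x hx
    have h1 : ‖x‖ ≤ r := mem_closedBall_zero_iff.mp (hr (Or.inl hx))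
    have h2 : ‖π x‖ ≤ r := mem_closedBall_zero_iff.mp (hr (Or.inr (hπ x).1))
    calc ‖x - π x‖ ≤ ‖x‖ + ‖π x‖ := norm_sub_le _ _
      _ ≤ R := by rw [hRdef]; linarith [le_max_left r (0:ℝ)]
  have haeR : ∀ᵐ x ∂μ, ‖x - π x‖ ≤ R := haeK.mono fun x hx => hvR x hx
  set M : ℝ := R + ‖B‖ with hMdef
  have hM0 : 0 ≤ M := by positivity
  have key_pow : ∀ t C : ℝ, 0 ≤ t → t ≤ C → t ^ (p - 2) * t ≤ C ^ (p - 1) := by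
    intro t C ht htC
    rcases eq_or_lt_of_le ht with rfl | htpos
    · simpa using Real.rpow_nonneg (le_trans ht htC) (p - 1)
    · calc t ^ (p - 2) * t = t ^ ((p - 2) + 1) := by
            rw [Real.rpow_add htpos, Real.rpow_one]
        _ = t ^ (p - 1) := by ring_nf
        _ ≤ C ^ (p - 1) := Real.rpow_le_rpow ht htC (by linarith)
  set F : ℝ → EuclideanSpace ℝ (Fin d) → ℝ := fun ε x => ‖x - π x - ε • B‖ ^ p with hFdef
  set F' : ℝ → EuclideanSpace ℝ (Fin d) → ℝ :=
    fun ε x => -(p * ‖x - π x - ε • B‖ ^ (p - 2) * (inner ℝ (x - π x - ε • B) B : ℝ)) with hF'def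
  have vmeas : Measurable fun x : EuclideanSpace ℝ (Fin d) => x - π x := measurable_id.sub hπm
  have wmeas : ∀ ε : ℝ, Measurable fun x : EuclideanSpace ℝ (Fin d) => x - π x - ε • B := fun ε =>
    vmeas.sub measurable_const
  have hFmeas : ∀ ε : ℝ, AEStronglyMeasurable (F ε) μ := fun ε =>
    ((wmeas ε).norm.pow measurable_const).aestronglyMeasurable
  have hwM : ∀ ε : ℝ, |ε| ≤ 1 → ∀ x ∈ K, ‖x - π x - ε • B‖ ≤ M := by
    intro ε hε x hx
    calc ‖x - π x - ε • B‖ ≤ ‖x - π x‖ + ‖ε • B‖ := norm_sub_le _ _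
      _ ≤ R + ‖B‖ := by
          refine add_le_add (hvR x hx) ?_
          rw [norm_smul, Real.norm_eq_abs]
          calc |ε| * ‖B‖ ≤ 1 * ‖B‖ := mul_le_mul_of_nonneg_right hε (norm_nonneg _)
            _ = ‖B‖ := one_mul _
  have hFint : ∀ ε : ℝ, |ε| ≤ 1 → Integrable (F ε) μ := by
    intro ε hε
    refine (integrable_const (M ^ p)).mono' (hFmeas ε) ?_
    filter_upwards [haeK] with x hx
    rw [hFdef]
    simp only [Real.norm_eq_abs]
    rw [abs_of_nonneg (Real.rpow_nonneg (norm_nonneg _) _)]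
    exact Real.rpow_le_rpow (norm_nonneg _) (hwM ε hε x hx) hp0.le
  have hF'meas : ∀ ε : ℝ, AEStronglyMeasurable (F' ε) μ := by
    intro ε
    apply Measurable.aestronglyMeasurable
    exact ((measurable_const.mul ((wmeas ε).norm.pow measurable_const)).mul
      ((wmeas ε).inner measurable_const)).neg
  have hF'bound : ∀ ε : ℝ, |ε| ≤ 1 → ∀ x ∈ K, ‖F' ε x‖ ≤ p * M ^ (p - 1) * ‖B‖ := by
    intro ε hε x hx
    have h1 : ‖F' ε x‖ = p * ‖x - π x - ε • B‖ ^ (p - 2) *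
        |(inner ℝ (x - π x - ε • B) B : ℝ)| := by
      rw [hF'def]
      simp only [Real.norm_eq_abs, abs_neg, abs_mul]
      rw [abs_of_nonneg hp0.le, abs_of_nonneg (Real.rpow_nonneg (norm_nonneg _) _)]
    rw [h1]
    have h2 : |(inner ℝ (x - π x - ε • B) B : ℝ)| ≤ ‖x - π x - ε • B‖ * ‖B‖ :=
      abs_real_inner_le_norm _ B
    have h3 : ‖x - π x - ε • B‖ ^ (p - 2) * ‖x - π x - ε • B‖ ≤ M ^ (p - 1) :=
      key_pow _ M (norm_nonneg _) (hwM ε hε x hx)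
    have h4 : (0:ℝ) ≤ ‖x - π x - ε • B‖ ^ (p - 2) := Real.rpow_nonneg (norm_nonneg _) _
    calc p * ‖x - π x - ε • B‖ ^ (p - 2) * |(inner ℝ (x - π x - ε • B) B : ℝ)|
        ≤ p * ‖x - π x - ε • B‖ ^ (p - 2) * (‖x - π x - ε • B‖ * ‖B‖) := by
          apply mul_le_mul_of_nonneg_left h2 (by positivity)
      _ = p * ((‖x - π x - ε • B‖ ^ (p - 2) * ‖x - π x - ε • B‖) * ‖B‖) := by ring
      _ ≤ p * (M ^ (p - 1) * ‖B‖) :=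
          mul_le_mul_of_nonneg_left (mul_le_mul_of_nonneg_right h3 (norm_nonneg _)) hp0.le
      _ = p * M ^ (p - 1) * ‖B‖ := by ring
  have hdiff : ∀ x : EuclideanSpace ℝ (Fin d), ∀ ε : ℝ, HasDerivAt (fun t => F t x) (F' ε x) ε := by
    intro x ε
    have h2 : HasDerivAt (fun t : ℝ => x - π x - t • B) (-B) ε := by
      have := ((hasDerivAt_id ε).smul_const B).const_sub (x - π x)
      simpa using this
    have h1 := hasFDerivAt_norm_rpow (x - π x - ε • B) hp
    have h3 := h1.comp_hasDerivAt ε h2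
    refine h3.congr_deriv ?_
    rw [hF'def]
    simp only [ContinuousLinearMap.smul_apply, innerSL_apply_apply, inner_neg_right, smul_eq_mul]
    ring
  have main := hasDerivAt_integral_of_dominated_loc_of_deriv_le (𝕜 := ℝ) (μ := μ)
    (F := F) (F' := F') (x₀ := (0:ℝ)) (bound := fun _ : EuclideanSpace ℝ (Fin d) => p * M ^ (p - 1) * ‖B‖)
    (s := Metric.ball (0:ℝ) 1) (Metric.ball_mem_nhds 0 one_pos) (Eventually.of_forall hFmeas) (hFint 0 (by simp)) (hF'meas 0)
    ?_ (integrable_const _) ?_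
  rotate_left
  · filter_upwards [haeK] with x hx
    intro ε hε
    have : |ε| < 1 := by simpa [Real.norm_eq_abs] using mem_ball_zero_iff.mp hε
    exact hF'bound ε this.le x hx
  · exact Eventually.of_forall fun x ε _ => hdiff x ε
  obtain ⟨-, hderiv⟩ := main
  have hgint : Integrable (fun x : EuclideanSpace ℝ (Fin d) => ‖x - π x‖ ^ (p - 2) • (x - π x)) μ := by
    refine (integrable_const (R ^ (p - 1))).mono' ?_ ?_
    · exact ((vmeas.norm.pow measurable_const).smul vmeas).aestronglyMeasurable
    · filter_upwards [haeR] with x hx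
      rw [norm_smul, Real.norm_eq_abs, abs_of_nonneg (Real.rpow_nonneg (norm_nonneg _) _)]
      exact key_pow _ _ (norm_nonneg _) hx
  have hI : (∫ x, F' 0 x ∂μ) = -‖B‖ ^ 2 := by
    have e1 : ∀ x : EuclideanSpace ℝ (Fin d), F' 0 x =
        -(p * (inner ℝ B (‖x - π x‖ ^ (p - 2) • (x - π x)) : ℝ)) := by
      intro x
      have h5 : (inner ℝ B (‖x - π x‖ ^ (p - 2) • (x - π x)) : ℝ) =
          ‖x - π x‖ ^ (p - 2) * (inner ℝ (x - π x) B : ℝ) := by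
        rw [real_inner_smul_right, real_inner_comm]
      rw [hF'def, h5]
      simp only [zero_smul, sub_zero]
      ring
    calc (∫ x, F' 0 x ∂μ)
        = ∫ x, -(p * (inner ℝ B (‖x - π x‖ ^ (p - 2) • (x - π x)) : ℝ)) ∂μ :=
          integral_congr_ae (Eventually.of_forall e1)
      _ = -(p * ∫ x, (inner ℝ B (‖x - π x‖ ^ (p - 2) • (x - π x)) : ℝ) ∂μ) := by
          rw [integral_neg, integral_const_mul]
      _ = -(p * (inner ℝ B (∫ x, ‖x - π x‖ ^ (p - 2) • (x - π x) ∂μ) : ℝ)) := by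
          rw [integral_inner hgint]
      _ = -(inner ℝ B B : ℝ) := by
          nth_rewrite 2 [hB]
          rw [real_inner_smul_left, real_inner_comm]
      _ = -‖B‖ ^ 2 := by rw [real_inner_self_eq_norm_sq]
  rw [hI] at hderiv
  have hslope : Tendsto (fun ε : ℝ => ((∫ x, F ε x ∂μ) - ∫ x, F 0 x ∂μ) / ε)
      (nhdsWithin 0 (Set.Ioi 0)) (nhds (-‖B‖ ^ 2)) := by
    have h1 := hasDerivAt_iff_tendsto_slope.mp hderiv
    have h2 : Tendsto (slope (fun ε => ∫ x, F ε x ∂μ) 0) (nhdsWithin 0 (Set.Ioi 0))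
        (nhds (-‖B‖ ^ 2)) :=
      h1.mono_left (nhdsWithin_mono 0 fun y hy => ne_of_gt hy)
    refine h2.congr' ?_
    filter_upwards [] with ε
    rw [slope_def_field, sub_zero]
  have hJ0 : (∫ x, Metric.infDist x S ^ p ∂μ) = ∫ x, F 0 x ∂μ := by
    refine integral_congr_ae (Eventually.of_forall fun x => ?_)
    rw [hFdef]
    simp [hd x]
  have hJle : ∀ ε : ℝ, 0 < ε → ε ≤ 1 →
      (∫ x, Metric.infDist x ((fun σ => σ + ε • B) '' S) ^ p ∂μ) ≤ ∫ x, F ε x ∂μ := by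
    intro ε hε hε1
    refine integral_mono_of_nonneg (Eventually.of_forall fun x =>
      Real.rpow_nonneg Metric.infDist_nonneg p) (hFint ε (by rw [abs_of_pos hε]; exact hε1)) ?_
    refine Eventually.of_forall fun x => ?_
    have h1 : Metric.infDist x ((fun σ => σ + ε • B) '' S) ≤ ‖x - π x - ε • B‖ := by
      calc Metric.infDist x ((fun σ => σ + ε • B) '' S) ≤ dist x (π x + ε • B) :=
            Metric.infDist_le_dist_of_mem ⟨π x, (hπ x).1, rfl⟩
        _ = ‖x - π x - ε • B‖ := by rw [dist_eq_norm]; congr 1; abel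
    exact Real.rpow_le_rpow Metric.infDist_nonneg h1 hp0.le
  have hJint : ∀ ε : ℝ, 0 < ε → ε ≤ 1 →
      Integrable (fun x => Metric.infDist x ((fun σ => σ + ε • B) '' S) ^ p) μ := by
    intro ε hε hε1
    refine (integrable_const (M ^ p)).mono' ?_ ?_
    · exact ((Metric.continuous_infDist_pt _).measurable.pow measurable_const
        ).aestronglyMeasurable
    · filter_upwards [haeK] with x hx
      rw [Real.norm_eq_abs, abs_of_nonneg (Real.rpow_nonneg Metric.infDist_nonneg _)]
      refine Real.rpow_le_rpow Metric.infDist_nonneg ?_ hp0.le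
      calc Metric.infDist x ((fun σ => σ + ε • B) '' S) ≤ dist x (π x + ε • B) :=
            Metric.infDist_le_dist_of_mem ⟨π x, (hπ x).1, rfl⟩
        _ = ‖x - π x - ε • B‖ := by rw [dist_eq_norm]; congr 1; abel
        _ ≤ M := hwM ε (by rw [abs_of_pos hε]; exact hε1) x hx
  have hint1 : Integrable (fun x => Metric.infDist x S ^ p) μ := by
    refine (hFint 0 (by simp)).congr (Eventually.of_forall fun x => ?_)
    rw [hFdef]
    simp [hd x]
  have hlow : ∀ ε : ℝ, 0 < ε → ε ≤ 1 →
      -(p * R ^ (p - 1) * ‖B‖) ≤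
        ((∫ x, Metric.infDist x ((fun σ => σ + ε • B) '' S) ^ p ∂μ) -
          ∫ x, Metric.infDist x S ^ p ∂μ) / ε := by
    intro ε hε hε1
    have hptwise : ∀ᵐ x ∂μ, Metric.infDist x S ^ p -
        Metric.infDist x ((fun σ => σ + ε • B) '' S) ^ p ≤ p * R ^ (p - 1) * ‖B‖ * ε := by
      filter_upwards [haeK] with x hx
      have ha0 : 0 ≤ Metric.infDist x S := Metric.infDist_nonneg
      have hb0 : 0 ≤ Metric.infDist x ((fun σ => σ + ε • B) '' S) := Metric.infDist_nonneg
      have haR : Metric.infDist x S ≤ R := (hd x).le.trans (hvR x hx)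
      have hiso : Isometry (fun σ : EuclideanSpace ℝ (Fin d) => σ + ε • B) := fun a b => by
        simp [edist_add_right]
      have hbeq : Metric.infDist x ((fun σ => σ + ε • B) '' S) =
          Metric.infDist (x - ε • B) S := by
        have h0 := Metric.infDist_image (Φ := fun σ : EuclideanSpace ℝ (Fin d) => σ + ε • B)
          (x := x - ε • B) (t := S) hiso
        simp only [sub_add_cancel] at h0
        exact h0
      have hab : Metric.infDist x S ≤
          Metric.infDist x ((fun σ => σ + ε • B) '' S) + ε * ‖B‖ := by
        rw [hbeq]
        have h6 : dist x (x - ε • B) = ε * ‖B‖ := by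
          rw [dist_eq_norm]
          simp [norm_smul, abs_of_pos hε]
        have := Metric.infDist_le_infDist_add_dist (x := x) (y := x - ε • B) (s := S)
        rw [h6] at this
        exact this
      rcases le_or_gt (Metric.infDist x S) (Metric.infDist x ((fun σ => σ + ε • B) '' S))
        with hcase | hcase
      · have h7 : Metric.infDist x S ^ p ≤
            Metric.infDist x ((fun σ => σ + ε • B) '' S) ^ p :=
          Real.rpow_le_rpow ha0 hcase hp0.le
        have hnn : (0:ℝ) ≤ p * R ^ (p - 1) * ‖B‖ * ε := by positivity
        linarith
      · have h8 := rpow_sub_rpow_le_aux hp hb0 hcase.le haR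
        have h9 : Metric.infDist x S -
            Metric.infDist x ((fun σ => σ + ε • B) '' S) ≤ ε * ‖B‖ := by linarith
        have h10 : p * R ^ (p - 1) *
            (Metric.infDist x S - Metric.infDist x ((fun σ => σ + ε • B) '' S)) ≤
            p * R ^ (p - 1) * (ε * ‖B‖) :=
          mul_le_mul_of_nonneg_left h9 (by positivity)
        calc Metric.infDist x S ^ p -
              Metric.infDist x ((fun σ => σ + ε • B) '' S) ^ p
            ≤ p * R ^ (p - 1) *
              (Metric.infDist x S - Metric.infDist x ((fun σ => σ + ε • B) '' S)) := h8
          _ ≤ p * R ^ (p - 1) * (ε * ‖B‖) := h10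
          _ = p * R ^ (p - 1) * ‖B‖ * ε := by ring
    have hint2 := hJint ε hε hε1
    have hdiffle : (∫ x, Metric.infDist x S ^ p ∂μ) -
        (∫ x, Metric.infDist x ((fun σ => σ + ε • B) '' S) ^ p ∂μ) ≤
        p * R ^ (p - 1) * ‖B‖ * ε := by
      rw [← integral_sub hint1 hint2]
      calc (∫ x, Metric.infDist x S ^ p -
            Metric.infDist x ((fun σ => σ + ε • B) '' S) ^ p ∂μ)
          ≤ ∫ _x, p * R ^ (p - 1) * ‖B‖ * ε ∂μ :=
            integral_mono_ae (hint1.sub hint2) (integrable_const _) hptwise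
        _ = p * R ^ (p - 1) * ‖B‖ * ε := by simp
    rw [le_div_iff₀ hε]
    nlinarith [hdiffle]
  have hub : ∀ᶠ ε in nhdsWithin (0:ℝ) (Set.Ioi 0),
      ((∫ x, Metric.infDist x ((fun σ => σ + ε • B) '' S) ^ p ∂μ) -
        ∫ x, Metric.infDist x S ^ p ∂μ) / ε ≤
      ((∫ x, F ε x ∂μ) - ∫ x, F 0 x ∂μ) / ε := by
    filter_upwards [Ioc_mem_nhdsGT_of_mem (Set.left_mem_Ico.mpr one_pos)] with ε hε
    rw [hJ0]
    have h1 := hJle ε hε.1 hε.2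
    gcongr
    exact hε.1.le
  have hcob : IsCoboundedUnder (· ≤ ·) (nhdsWithin (0:ℝ) (Set.Ioi 0))
      (fun ε : ℝ =>
        ((∫ x, Metric.infDist x ((fun σ => σ + ε • B) '' S) ^ p ∂μ) -
          ∫ x, Metric.infDist x S ^ p ∂μ) / ε) := by
    refine IsBoundedUnder.isCoboundedUnder_le ?_
    refine ⟨-(p * R ^ (p - 1) * ‖B‖), ?_⟩
    rw [eventually_map]
    filter_upwards [Ioc_mem_nhdsGT_of_mem (Set.left_mem_Ico.mpr one_pos)] with ε hε
    exact hlow ε hε.1 hε.2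
  calc limsup (fun ε : ℝ =>
        ((∫ x, Metric.infDist x ((fun σ => σ + ε • B) '' S) ^ p ∂μ) -
          ∫ x, Metric.infDist x S ^ p ∂μ) / ε) (nhdsWithin 0 (Set.Ioi 0))
      ≤ limsup (fun ε : ℝ => ((∫ x, F ε x ∂μ) - ∫ x, F 0 x ∂μ) / ε)
          (nhdsWithin 0 (Set.Ioi 0)) :=
        limsup_le_limsup hub hcob hslope.isBoundedUnder_le
    _ = -‖B‖ ^ 2 := hslope.limsup_eq
end

section
/- Let μ be a compactly supported Borel probability measure on ℝ^d such that μ(A) = 0 for every compact connected A with finite H¹-measure, let p ≥ 1, l ≥ 0, and let Σ be a minimizer of J_p over S_l = { Σ' compact connected : H¹(Σ') ≤ l }. Then Σ is contained in the convex hull of the support of μ. -/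
open Metric Set

section BallProj

variable {E : Type*} [NormedAddCommGroup E] [InnerProductSpace ℝ E]

local notation "⟪" x ", " y "⟫" => @inner ℝ _ _ x y

noncomputable def ballProj (o : E) (r : ℝ) (y : E) : E :=
  o + (min 1 (r / ‖y - o‖)) • (y - o)

lemma ballProj_sub (o : E) (r : ℝ) (y : E) :
    ballProj o r y - o = (min 1 (r / ‖y - o‖)) • (y - o) := by
  simp [ballProj]

lemma ballProj_of_mem {o : E} {r : ℝ} {y : E} (h : ‖y - o‖ ≤ r) :
    ballProj o r y = y := by
  rcases eq_or_ne (y - o) 0 with h0 | h0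
  · have : y = o := by rwa [sub_eq_zero] at h0
    simp [ballProj, this]
  · have hn : 0 < ‖y - o‖ := norm_pos_iff.2 h0
    have : min 1 (r / ‖y - o‖) = 1 := min_eq_left ((one_le_div hn).2 h)
    simp [ballProj, this]

lemma ballProj_norm_le {o : E} {r : ℝ} (hr : 0 ≤ r) (y : E) :
    ‖ballProj o r y - o‖ ≤ r := by
  rw [ballProj_sub, norm_smul, Real.norm_eq_abs]
  rcases eq_or_ne (y - o) 0 with h0 | h0
  · simp [h0, hr]
  · have hn : 0 < ‖y - o‖ := norm_pos_iff.2 h0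
    rcases le_total (‖y - o‖) r with h | h
    · have : |min 1 (r / ‖y - o‖)| ≤ 1 := by
        rw [abs_of_nonneg (le_min zero_le_one (by positivity))]
        exact min_le_left _ _
      nlinarith [norm_nonneg (y - o)]
    · have : |min 1 (r / ‖y - o‖)| ≤ r / ‖y - o‖ := by
        rw [abs_of_nonneg (le_min zero_le_one (by positivity))]
        exact min_le_right _ _
      calc |min 1 (r / ‖y - o‖)| * ‖y - o‖ ≤ (r / ‖y - o‖) * ‖y - o‖ := by
            exact mul_le_mul_of_nonneg_right this (norm_nonneg _)
        _ = r := by field_simp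

lemma ballProj_inner_le {o : E} {r : ℝ} (hr : 0 ≤ r) (y : E) {q : E} (hq : ‖q - o‖ ≤ r) :
    ⟪y - ballProj o r y, q - ballProj o r y⟫ ≤ 0 := by
  rcases eq_or_ne (y - o) 0 with h0 | h0
  · have hy : y = o := by rwa [sub_eq_zero] at h0
    simp [ballProj, hy]
  · have hn : 0 < ‖y - o‖ := norm_pos_iff.2 h0
    rcases le_total (‖y - o‖) r with h | h
    · rw [ballProj_of_mem h]; simp
    · set c : ℝ := min 1 (r / ‖y - o‖) with hc
      have hcr : c = r / ‖y - o‖ := min_eq_right ((div_le_one hn).2 h)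
      have hc0 : 0 ≤ c := le_min zero_le_one (by positivity)
      have hc1 : c ≤ 1 := min_le_left _ _
      have h1 : y - ballProj o r y = (1 - c) • (y - o) := by
        rw [ballProj]; rw [sub_smul, one_smul]; abel
      have h2 : q - ballProj o r y = (q - o) - c • (y - o) := by
        rw [ballProj]; abel
      rw [h1, h2, inner_sub_right, real_inner_smul_left, real_inner_smul_left,
        real_inner_smul_right, real_inner_self_eq_norm_sq]
      have hCS : ⟪y - o, q - o⟫ ≤ ‖y - o‖ * ‖q - o‖ := real_inner_le_norm _ _
      have hcn : c * ‖y - o‖ = r := by rw [hcr]; field_simp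
      nlinarith [norm_nonneg (q - o), norm_nonneg (y - o)]

lemma ballProj_sq_le {o : E} {r : ℝ} (hr : 0 ≤ r) (y : E) {q : E} (hq : ‖q - o‖ ≤ r) :
    ‖q - ballProj o r y‖ ^ 2 + ‖y - ballProj o r y‖ ^ 2 ≤ ‖q - y‖ ^ 2 := by
  have h := ballProj_inner_le (o := o) hr y hq
  have hexp : q - y = (q - ballProj o r y) - (y - ballProj o r y) := by abel
  rw [hexp]
  rw [norm_sub_sq_real (q - ballProj o r y) (y - ballProj o r y)]
  have : ⟪q - ballProj o r y, y - ballProj o r y⟫ ≤ 0 := by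
    rw [real_inner_comm]; exact h
  nlinarith

lemma ballProj_norm_sub_le {o : E} {r : ℝ} (hr : 0 ≤ r) (y : E) {q : E} (hq : ‖q - o‖ ≤ r) :
    ‖q - ballProj o r y‖ ≤ ‖q - y‖ := by
  have h := ballProj_sq_le (o := o) hr y hq
  nlinarith [norm_nonneg (q - ballProj o r y), norm_nonneg (q - y),
    sq_nonneg ‖y - ballProj o r y‖]

lemma ballProj_lipschitz {o : E} {r : ℝ} (hr : 0 ≤ r) : LipschitzWith 1 (ballProj o r) := by
  apply LipschitzWith.of_dist_le_mul
  intro a b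
  simp only [NNReal.coe_one, one_mul, dist_eq_norm]
  set Pa := ballProj o r a with hPa
  set Pb := ballProj o r b with hPb
  have h1 : ⟪a - Pa, Pb - Pa⟫ ≤ 0 := ballProj_inner_le hr a (ballProj_norm_le hr b)
  have h2 : ⟪b - Pb, Pa - Pb⟫ ≤ 0 := ballProj_inner_le hr b (ballProj_norm_le hr a)
  have t1 : 0 ≤ ⟪Pa - Pb, a - Pa⟫ := by
    have e : ⟪Pa - Pb, a - Pa⟫ = - ⟪a - Pa, Pb - Pa⟫ := by
      rw [real_inner_comm, ← inner_neg_right, neg_sub]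
    rw [e]; linarith
  have t2 : 0 ≤ ⟪Pa - Pb, Pb - b⟫ := by
    have e : ⟪Pa - Pb, Pb - b⟫ = - ⟪b - Pb, Pa - Pb⟫ := by
      rw [real_inner_comm, ← inner_neg_left, neg_sub]
    rw [e]; linarith
  have key : ‖Pa - Pb‖ ^ 2 ≤ ⟪Pa - Pb, a - b⟫ := by
    have hab : a - b = (Pa - Pb) + (a - Pa) + (Pb - b) := by abel
    rw [hab, inner_add_right, inner_add_right, real_inner_self_eq_norm_sq]
    linarith
  have hCS : ⟪Pa - Pb, a - b⟫ ≤ ‖Pa - Pb‖ * ‖a - b‖ := real_inner_le_norm _ _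
  rcases eq_or_lt_of_le (norm_nonneg (Pa - Pb)) with h0 | h0
  · rw [← h0]; exact norm_nonneg _
  · have : ‖Pa - Pb‖ * ‖Pa - Pb‖ ≤ ‖Pa - Pb‖ * ‖a - b‖ := by nlinarith
    exact le_of_mul_le_mul_left this h0

lemma ballProj_far_eq {o : E} {r γ : ℝ} (hr : 0 ≤ r) (hγ : 0 < γ) {y : E}
    (hy : r + γ ≤ ‖y - o‖) :
    ballProj o r y = o + (r / (r + γ)) • (ballProj o (r + γ) y - o) := by
  have hn : 0 < ‖y - o‖ := lt_of_lt_of_le (by linarith) hy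
  have hrγ : 0 < r + γ := by linarith
  have e1 : min 1 (r / ‖y - o‖) = r / ‖y - o‖ :=
    min_eq_right ((div_le_one hn).2 (by linarith))
  have e2 : min 1 ((r + γ) / ‖y - o‖) = (r + γ) / ‖y - o‖ :=
    min_eq_right ((div_le_one hn).2 hy)
  rw [ballProj, ballProj, e1, e2]
  rw [add_sub_cancel_left, smul_smul]
  congr 2
  field_simp

lemma ballProj_lipschitzOnWith {o : E} {r γ : ℝ} (hr : 0 ≤ r) (hγ : 0 < γ) :
    LipschitzOnWith (Real.toNNReal (r / (r + γ))) (ballProj o r)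
      {y : E | r + γ ≤ ‖y - o‖} := by
  rw [lipschitzOnWith_iff_dist_le_mul]
  intro a ha b hb
  have hrγ : 0 < r + γ := by linarith
  rw [ballProj_far_eq hr hγ ha, ballProj_far_eq hr hγ hb]
  rw [dist_eq_norm, dist_eq_norm]
  have heq : o + (r / (r + γ)) • (ballProj o (r + γ) a - o) -
      (o + (r / (r + γ)) • (ballProj o (r + γ) b - o)) =
      (r / (r + γ)) • (ballProj o (r + γ) a - ballProj o (r + γ) b) := by
    rw [smul_sub, smul_sub, smul_sub]; abel
  rw [heq, norm_smul, Real.norm_eq_abs, abs_of_nonneg (by positivity),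
    Real.coe_toNNReal _ (by positivity)]
  have hlip := ballProj_lipschitz (o := o) (r := r + γ) (by linarith)
  have := hlip.dist_le_mul a b
  simp only [NNReal.coe_one, one_mul, dist_eq_norm] at this
  exact mul_le_mul_of_nonneg_left this (by positivity)

lemma ballProj_far_dist {o : E} {r : ℝ} (hr : 0 ≤ r) {y : E} (hy : r ≤ ‖y - o‖) :
    ‖y - ballProj o r y‖ = ‖y - o‖ - r := by
  rcases eq_or_ne (y - o) 0 with h0 | h0
  · have hy0 : y = o := by rwa [sub_eq_zero] at h0
    have : r = 0 := le_antisymm (by simpa [hy0] using hy) hr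
    simp [ballProj, hy0, this]
  · have hn : 0 < ‖y - o‖ := norm_pos_iff.2 h0
    have e1 : min 1 (r / ‖y - o‖) = r / ‖y - o‖ :=
      min_eq_right ((div_le_one hn).2 hy)
    have h1 : y - ballProj o r y = (1 - r / ‖y - o‖) • (y - o) := by
      rw [ballProj, e1, sub_smul, one_smul]; abel
    rw [h1, norm_smul, Real.norm_eq_abs,
      abs_of_nonneg (by rw [sub_nonneg]; exact (div_le_one hn).2 hy)]
    field_simp

end BallProj

open Set

lemma isCompact_convexHull_of_isCompact {E : Type*} [NormedAddCommGroup E] [NormedSpace ℝ E]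
    [FiniteDimensional ℝ E] {s : Set E} (hs : IsCompact s) :
    IsCompact (convexHull ℝ s) := by
  rcases s.eq_empty_or_nonempty with rfl | ⟨s₀, hs₀⟩
  · simpa using isCompact_empty
  set m : ℕ := Module.finrank ℝ E + 1
  set D : Set ((Fin m → ℝ) × (Fin m → E)) :=
    (stdSimplex ℝ (Fin m)) ×ˢ (Set.univ.pi fun _ => s) with hD
  have hDc : IsCompact D :=
    (isCompact_stdSimplex (𝕜 := ℝ) (ι := Fin m)).prod (isCompact_univ_pi fun _ => hs)
  set φ : (Fin m → ℝ) × (Fin m → E) → E := fun wx => ∑ i, wx.1 i • wx.2 i with hφ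
  have hφc : Continuous φ := by
    apply continuous_finset_sum
    intro i _
    exact ((continuous_apply i).comp continuous_fst).smul
      ((continuous_apply i).comp continuous_snd)
  have himg : convexHull ℝ s = φ '' D := by
    apply Subset.antisymm
    · intro x hx
      obtain ⟨ι, hι, z, w, hzs, haff, hw0, hw1, hxx⟩ :=
        eq_pos_convex_span_of_mem_convexHull hx
      have hcard : Fintype.card ι ≤ m := by
        have h1 := haff.card_le_finrank_succ
        have h2 : Module.finrank ℝ (vectorSpan ℝ (Set.range z)) ≤ Module.finrank ℝ E :=
          Submodule.finrank_le _
        omega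
      obtain ⟨e⟩ : Nonempty (ι ↪ Fin m) :=
        Function.Embedding.nonempty_of_card_le (by simpa using hcard)
      classical
      set w' : Fin m → ℝ := fun j => if h : ∃ i, e i = j then w h.choose else 0 with hw'
      set z' : Fin m → E := fun j => if h : ∃ i, e i = j then z h.choose else s₀ with hz'
      have hwe : ∀ i : ι, w' (e i) = w i := by
        intro i
        have h : ∃ i', e i' = e i := ⟨i, rfl⟩
        simp only [hw', dif_pos h]
        congr 1
        exact e.injective h.choose_spec
      have hze : ∀ i : ι, z' (e i) = z i := by
        intro i
        have h : ∃ i', e i' = e i := ⟨i, rfl⟩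
        simp only [hz', dif_pos h]
        congr 1
        exact e.injective h.choose_spec
      refine ⟨(w', z'), ⟨?_, ?_⟩, ?_⟩
      · constructor
        · intro j
          by_cases h : ∃ i, e i = j
          · simp only [hw', dif_pos h]; exact (hw0 _).le
          · simp [hw', dif_neg h]
        · have h1 : ∑ j ∈ Finset.univ.map e, w' j = ∑ j, w' j := by
            apply Finset.sum_subset (Finset.subset_univ _)
            intro j _ hj
            have h : ¬∃ i, e i = j := by simpa using hj
            simp [hw', dif_neg h]
          have h2 : ∑ j ∈ Finset.univ.map e, w' j = ∑ i, w i := by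
            rw [Finset.sum_map]
            exact Finset.sum_congr rfl fun i _ => hwe i
          rw [← h1, h2, hw1]
      · intro j _
        by_cases h : ∃ i, e i = j
        · simp only [hz', dif_pos h]; exact hzs ⟨h.choose, rfl⟩
        · simp [hz', dif_neg h, hs₀]
      · simp only [hφ]
        have h1 : ∑ j ∈ Finset.univ.map e, w' j • z' j = ∑ j, w' j • z' j := by
          apply Finset.sum_subset (Finset.subset_univ _)
          intro j _ hj
          have h : ¬∃ i, e i = j := by simpa using hj
          simp [hw', dif_neg h]
        have h2 : ∑ j ∈ Finset.univ.map e, w' j • z' j = ∑ i, w i • z i := by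
          rw [Finset.sum_map]
          exact Finset.sum_congr rfl fun i _ => by rw [hwe i, hze i]
        rw [← h1, h2, hxx]
    · rintro _ ⟨⟨w, x⟩, ⟨⟨hw0, hw1⟩, hx⟩, rfl⟩
      have := Finset.centerMass_mem_convexHull (Finset.univ : Finset (Fin m))
        (fun i _ => hw0 i) (by rw [hw1]; norm_num)
        (fun i _ => hx i (Set.mem_univ i))
      rwa [Finset.centerMass_eq_of_sum_1 _ _ hw1] at this
  rw [himg]
  exact hDc.image hφc

open MeasureTheory Metric Set

section MeasureHelpers

variable {α : Type*} [TopologicalSpace α] [MeasurableSpace α] [OpensMeasurableSpace α]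
  {μ : Measure α}

lemma isClosed_suppSet (μ : Measure α) :
    IsClosed {x : α | ∀ U : Set α, IsOpen U → x ∈ U → 0 < μ U} := by
  rw [← isOpen_compl_iff]
  rw [isOpen_iff_forall_mem_open]
  intro x hx
  simp only [mem_compl_iff, mem_setOf_eq, not_forall] at hx
  obtain ⟨U, hU, hxU, hμU⟩ := hx
  exact ⟨U, fun y hy => by
    simp only [mem_compl_iff, mem_setOf_eq, not_forall]
    exact ⟨U, hU, hy, hμU⟩, hU, hxU⟩

lemma measure_compl_suppSet [SecondCountableTopology α] (μ : Measure α) :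
    μ {x : α | ∀ U : Set α, IsOpen U → x ∈ U → 0 < μ U}ᶜ = 0 := by
  set 𝒰 : Set (Set α) := {U | IsOpen U ∧ μ U = 0} with h𝒰
  obtain ⟨T, hTc, hT𝒰, hTU⟩ := TopologicalSpace.isOpen_sUnion_countable 𝒰 fun U hU => hU.1
  have heq : {x : α | ∀ U : Set α, IsOpen U → x ∈ U → 0 < μ U}ᶜ = ⋃₀ 𝒰 := by
    ext x
    simp only [mem_compl_iff, mem_setOf_eq, not_forall, mem_sUnion]
    constructor
    · rintro ⟨U, hU, hxU, hμU⟩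
      exact ⟨U, ⟨hU, by simpa using hμU⟩, hxU⟩
    · rintro ⟨U, ⟨hU, hμU⟩, hxU⟩
      exact ⟨U, hU, hxU, by simp [hμU]⟩
  rw [heq, ← hTU]
  rw [measure_sUnion_null_iff hTc]
  exact fun U hU => (hT𝒰 hU).2

lemma integrable_of_compact_compl_null [IsFiniteMeasure μ] {K : Set α} (hK : IsCompact K)
    (hKc : μ Kᶜ = 0) {g : α → ℝ} (hg : Continuous g) : Integrable g μ := by
  obtain ⟨M, hM⟩ := hK.exists_bound_of_continuousOn hg.continuousOn
  apply Integrable.mono' (integrable_const M) hg.aestronglyMeasurable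
  rw [ae_iff]
  apply measure_mono_null _ hKc
  intro x hx
  simp only [mem_setOf_eq, not_le] at hx
  intro hxK
  exact absurd (hM x hxK) (not_le.2 hx)

lemma int_contradiction [IsProbabilityMeasure μ] {g h : α → ℝ}
    (hg : Integrable g μ) (hh : Integrable h μ) {N : Set α} (hN : μ N = 0)
    (hle : ∀ x ∉ N, h x ≤ g x) {E₀ : Set α} (hE₀ : 0 < μ E₀)
    (hstrict : ∀ x ∈ E₀, x ∉ N → h x < g x) (hint : ∫ x, g x ∂μ ≤ ∫ x, h x ∂μ) : False := by
  have hae : ∀ᵐ x ∂μ, h x ≤ g x := by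
    rw [ae_iff]
    apply measure_mono_null _ hN
    intro x hx
    simp only [mem_setOf_eq, not_le] at hx
    by_contra hxN
    exact absurd (hle x hxN) (not_le.2 hx)
  have hsub : Integrable (fun x => g x - h x) μ := hg.sub hh
  have h0 : ∫ x, (g x - h x) ∂μ = 0 := by
    rw [integral_sub hg hh]
    have h1 : 0 ≤ ∫ x, (g x - h x) ∂μ :=
      integral_nonneg_of_ae (hae.mono fun x hx => by simpa using hx)
    rw [integral_sub hg hh] at h1
    linarith
  have hzero : (fun x => g x - h x) =ᵐ[μ] 0 :=
    (integral_eq_zero_iff_of_nonneg_ae (hae.mono fun x hx => by simpa using hx) hsub).1 h0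
  have : μ {x | g x - h x ≠ 0} = 0 := by
    rw [Filter.EventuallyEq, ae_iff] at hzero
    simpa using hzero
  have hE₀sub : E₀ ⊆ {x | g x - h x ≠ 0} ∪ N := by
    intro x hx
    by_cases hxN : x ∈ N
    · exact Or.inr hxN
    · exact Or.inl (by simp only [mem_setOf_eq]; have := hstrict x hx hxN; linarith)
  have : μ E₀ ≤ 0 := le_trans (measure_mono hE₀sub)
    (le_trans (measure_union_le _ _) (by rw [this, hN]; simp))
  exact absurd hE₀ (not_lt.2 this)

end MeasureHelpers

open MeasureTheory
open scoped RealInnerProductSpace NNReal ENNReal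

open scoped RealInnerProductSpace NNReal ENNReal

set_option maxHeartbeats 2000000 in
/-- minimizers of J_p over S_l are contained in the convex hull of
    the support of μ, assuming μ vanishes on compact connected sets of finite
    H¹-measure. -/
theorem stmt16 (d : ℕ) (μ : Measure (EuclideanSpace ℝ (Fin d))) [IsProbabilityMeasure μ]
    (hcs : ∃ K : Set (EuclideanSpace ℝ (Fin d)), IsCompact K ∧ μ Kᶜ = 0)
    (hμ : ∀ A : Set (EuclideanSpace ℝ (Fin d)), IsCompact A → IsConnected A →
      μH[1] A < ⊤ → μ A = 0)
    (p : ℝ) (hp : 1 ≤ p) (l : ℝ) (hl : 0 ≤ l)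
    (S : Set (EuclideanSpace ℝ (Fin d))) (hSc : IsCompact S) (hSconn : IsConnected S)
    (hSl : μH[1] S ≤ ENNReal.ofReal l)
    (hmin : ∀ T : Set (EuclideanSpace ℝ (Fin d)), IsCompact T → IsConnected T →
      μH[1] T ≤ ENNReal.ofReal l →
      (∫ x, Metric.infDist x S ^ p ∂μ) ≤ ∫ x, Metric.infDist x T ^ p ∂μ) :
    S ⊆ convexHull ℝ
      {x : EuclideanSpace ℝ (Fin d) | ∀ U : Set (EuclideanSpace ℝ (Fin d)),
        IsOpen U → x ∈ U → 0 < μ U} := by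
  classical
  intro z hzS
  by_contra hzC
  obtain ⟨K₀, hK₀c, hK₀n⟩ := hcs
  set Ω : Set (EuclideanSpace ℝ (Fin d)) := {x : EuclideanSpace ℝ (Fin d) | ∀ U : Set (EuclideanSpace ℝ (Fin d)), IsOpen U → x ∈ U → 0 < μ U} with hΩdef
  change z ∉ convexHull ℝ Ω at hzC
  have hΩclosed : IsClosed Ω := isClosed_suppSet μ
  have hΩcompl : μ Ωᶜ = 0 := measure_compl_suppSet μ
  have hΩsub : Ω ⊆ K₀ := by
    intro x hx
    by_contra hK
    have := hx K₀ᶜ hK₀c.isClosed.isOpen_compl hK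
    rw [hK₀n] at this
    exact lt_irrefl 0 this
  have hΩcpt : IsCompact Ω := hK₀c.of_isClosed_subset hΩclosed hΩsub
  have hΩpos : 0 < μ Ω := by
    by_contra h
    push_neg at h
    have h0 : μ Ω = 0 := le_antisymm h zero_le
    have : μ Set.univ ≤ μ Ω + μ Ωᶜ := le_trans (by rw [Set.union_compl_self]) (measure_union_le _ _)
    rw [h0, hΩcompl, measure_univ] at this
    simp at this
  have hΩne : Ω.Nonempty := by
    rcases Set.eq_empty_or_nonempty Ω with h | h
    · rw [h] at hΩpos; simp at hΩpos
    · exact h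
  set C : Set (EuclideanSpace ℝ (Fin d)) := convexHull ℝ Ω with hCdef
  have hCcpt : IsCompact C := isCompact_convexHull_of_isCompact hΩcpt
  have hCconv : Convex ℝ C := convex_convexHull ℝ Ω
  have hΩC : Ω ⊆ C := subset_convexHull ℝ Ω
  have hCne : C.Nonempty := hΩne.mono hΩC
  obtain ⟨ystar, hyC, hyd⟩ := hCcpt.exists_infDist_eq_dist hCne z
  set δ := dist z ystar with hδdef
  have hδpos : 0 < δ := by
    have h := (hCcpt.isClosed.notMem_iff_infDist_pos hCne).1 hzC
    rwa [hyd] at h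
  have hδnorm : ‖z - ystar‖ = δ := by rw [hδdef, dist_eq_norm]
  -- obtuse angle property of the nearest point on a convex set
  have hobt : ∀ w ∈ C, ⟪z - ystar, w - ystar⟫ ≤ 0 := by
    intro w hw
    by_contra hpos
    push_neg at hpos
    rcases eq_or_ne (w - ystar) 0 with hw0 | hw0
    · rw [hw0, inner_zero_right] at hpos; exact lt_irrefl 0 hpos
    · have hnw : 0 < ‖w - ystar‖ := norm_pos_iff.2 hw0
      set t : ℝ := min 1 (⟪z - ystar, w - ystar⟫ / ‖w - ystar‖ ^ 2) with htdef
      have ht0 : 0 < t := lt_min one_pos (by positivity)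
      have ht1 : t ≤ 1 := min_le_left _ _
      have hmem : ystar + t • (w - ystar) ∈ C := by
        have := hCconv hyC hw (by linarith : (0:ℝ) ≤ 1 - t) ht0.le (by ring)
        convert this using 1
        rw [sub_smul, one_smul, smul_sub]
        abel
      have hd : δ ≤ dist z (ystar + t • (w - ystar)) := by
        rw [← hyd]
        exact Metric.infDist_le_dist_of_mem hmem
      have hsq : δ ^ 2 ≤ ‖z - ystar - t • (w - ystar)‖ ^ 2 := by
        have h1 : dist z (ystar + t • (w - ystar)) = ‖z - ystar - t • (w - ystar)‖ := by
          rw [dist_eq_norm]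
          congr 1
          abel
        rw [← h1]
        nlinarith [dist_nonneg (x := z) (y := ystar + t • (w - ystar))]
      rw [norm_sub_sq_real, real_inner_smul_right, norm_smul, Real.norm_eq_abs,
        abs_of_nonneg ht0.le, mul_pow, hδnorm] at hsq
      have ht2 : t ≤ ⟪z - ystar, w - ystar⟫ / ‖w - ystar‖ ^ 2 := min_le_right _ _
      have hkey : t * ‖w - ystar‖ ^ 2 ≤ ⟪z - ystar, w - ystar⟫ := by
        rw [le_div_iff₀ (by positivity)] at ht2
        linarith
      have hmul := mul_le_mul_of_nonneg_left hkey ht0.le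
      nlinarith [mul_pos ht0 hpos]
  obtain ⟨Δ₀, hΔ₀⟩ := hCcpt.isBounded.subset_closedBall ystar
  set Δ := max Δ₀ 0 with hΔdef
  have hΔ0 : 0 ≤ Δ := le_max_right _ _
  have hΔ : ∀ w ∈ C, ‖w - ystar‖ ≤ Δ := by
    intro w hw
    have := hΔ₀ hw
    rw [Metric.mem_closedBall, dist_eq_norm] at this
    exact le_trans this (le_max_left _ _)
  set R : ℝ := Δ ^ 2 / δ + 1 with hRdef
  have hR : 0 < R := by positivity
  set v : EuclideanSpace ℝ (Fin d) := δ⁻¹ • (z - ystar) with hvdef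
  have hv : ‖v‖ = 1 := by
    rw [hvdef, norm_smul, Real.norm_eq_abs, abs_of_nonneg (by positivity), hδnorm]
    field_simp
  have hzy : z - ystar = δ • v := by
    rw [hvdef, smul_smul]
    rw [mul_inv_cancel₀ hδpos.ne', one_smul]
  set o : EuclideanSpace ℝ (Fin d) := ystar - R • v with hodef
  set r : ℝ := Real.sqrt (Δ ^ 2 + R ^ 2) with hrdef
  have hr0 : 0 < r := Real.sqrt_pos.2 (by positivity)
  have hCB : ∀ w ∈ C, ‖w - o‖ ≤ r := by
    intro w hw
    rw [hrdef, Real.le_sqrt (norm_nonneg _) (by positivity)]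
    have hwo : w - o = (w - ystar) + R • v := by rw [hodef]; abel
    rw [hwo, norm_add_sq_real, real_inner_smul_right, norm_smul, Real.norm_eq_abs,
      abs_of_nonneg hR.le, hv, mul_one]
    have h1 : ⟪w - ystar, v⟫ ≤ 0 := by
      rw [hvdef, real_inner_smul_right]
      have := hobt w hw
      rw [real_inner_comm] at this
      have hδinv : 0 ≤ δ⁻¹ := by positivity
      exact mul_nonpos_of_nonneg_of_nonpos hδinv this
    have h2 := hΔ w hw
    nlinarith [mul_nonpos_of_nonneg_of_nonpos hR.le h1, norm_nonneg (w - ystar),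
      pow_le_pow_left₀ (norm_nonneg (w - ystar)) h2 2]
  have hzo : ‖z - o‖ = δ + R := by
    have : z - o = (δ + R) • v := by
      have h5 : z - o = (z - ystar) + R • v := by rw [hodef]; abel
      rw [h5, hzy, ← add_smul]
    rw [this, norm_smul, Real.norm_eq_abs, abs_of_nonneg (by positivity), hv, mul_one]
  set δ'' : ℝ := δ + R - r with hδ''def
  have hδ''pos : 0 < δ'' := by
    rw [hδ''def, sub_pos, hrdef]
    rw [Real.sqrt_lt' (by positivity)]
    have h4 : δ * R = Δ ^ 2 + δ := by rw [hRdef]; field_simp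
    nlinarith [h4, hδpos, sq_nonneg Δ, sq_nonneg δ]
  set γ : ℝ := δ'' / 2 with hγdef
  have hγpos : 0 < γ := by positivity
  set P : EuclideanSpace ℝ (Fin d) → EuclideanSpace ℝ (Fin d) := ballProj o r with hPdef
  set PS : Set (EuclideanSpace ℝ (Fin d)) := P '' S with hPSdef
  have hSne : S.Nonempty := hSconn.nonempty
  have hPlip : LipschitzWith 1 P := ballProj_lipschitz hr0.le
  have hPcont : Continuous P := hPlip.continuous
  have hPScpt : IsCompact PS := hSc.image hPcont
  have hPSconn : IsConnected PS := hSconn.image P hPcont.continuousOn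
  have hPSne : PS.Nonempty := hSne.image P
  have hPSH : μH[1] PS ≤ ENNReal.ofReal l := by
    calc μH[1] PS ≤ (1 : ℝ≥0) ^ (1:ℝ) * μH[1] S := hPlip.hausdorffMeasure_image_le zero_le_one S
      _ = μH[1] S := by simp
      _ ≤ ENNReal.ofReal l := hSl
  have hμPS : μ PS = 0 :=
    hμ PS hPScpt hPSconn (lt_of_le_of_lt hPSH ENNReal.ofReal_lt_top)
  have hproj : ∀ x ∈ Ω, Metric.infDist x PS ≤ Metric.infDist x S := by
    intro x hx
    obtain ⟨y, hyS, hyeq⟩ := hSc.exists_infDist_eq_dist hSne x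
    rw [hyeq]
    calc Metric.infDist x PS ≤ dist x (P y) :=
          Metric.infDist_le_dist_of_mem (Set.mem_image_of_mem P hyS)
      _ ≤ dist x y := by
          rw [dist_eq_norm, dist_eq_norm]
          exact ballProj_norm_sub_le hr0.le y (hCB x (hΩC hx))
  have hppos : 0 < p := lt_of_lt_of_le one_pos hp
  have hcontS : Continuous (fun x : EuclideanSpace ℝ (Fin d) => Metric.infDist x S ^ p) :=
    (Metric.continuous_infDist_pt S).rpow_const (fun x => Or.inr hppos.le)
  have hgint : Integrable (fun x : EuclideanSpace ℝ (Fin d) => Metric.infDist x S ^ p) μ :=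
    integrable_of_compact_compl_null hK₀c hK₀n hcontS
  by_cases hbr : ∀ y ∈ S, r + γ ≤ ‖y - o‖
  · -- all of S is far from the ball: projection strictly decreases distances a.e.
    have hTmin := hmin PS hPScpt hPSconn hPSH
    have hhint : Integrable (fun x : EuclideanSpace ℝ (Fin d) => Metric.infDist x PS ^ p) μ :=
      integrable_of_compact_compl_null hK₀c hK₀n
        ((Metric.continuous_infDist_pt PS).rpow_const (fun x => Or.inr hppos.le))
    refine int_contradiction hgint hhint hΩcompl ?_ (E₀ := Ω) hΩpos ?_ hTmin
    · intro x hx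
      rw [Set.notMem_compl_iff] at hx
      exact Real.rpow_le_rpow Metric.infDist_nonneg (hproj x hx) hppos.le
    · intro x hx _
      apply Real.rpow_lt_rpow Metric.infDist_nonneg _ hppos
      obtain ⟨y, hyS, hyeq⟩ := hSc.exists_infDist_eq_dist hSne x
      rw [hyeq]
      have hxo : ‖x - o‖ ≤ r := hCB x (hΩC hx)
      have hsq := ballProj_sq_le hr0.le y hxo
      have hfar : γ ≤ ‖y - ballProj o r y‖ := by
        rw [ballProj_far_dist hr0.le (le_trans (by linarith) (hbr y hyS))]
        have := hbr y hyS
        linarith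
      calc Metric.infDist x PS ≤ dist x (P y) :=
            Metric.infDist_le_dist_of_mem (Set.mem_image_of_mem P hyS)
        _ < dist x y := by
            rw [dist_eq_norm, dist_eq_norm]
            nlinarith [norm_nonneg (x - ballProj o r y), norm_nonneg (x - y)]
  · push_neg at hbr
    obtain ⟨y₁, hy₁S, hy₁⟩ := hbr
    set Efar : Set (EuclideanSpace ℝ (Fin d)) := {y : EuclideanSpace ℝ (Fin d) | r + γ ≤ ‖y - o‖} with hEfardef
    have hEfarClosed : IsClosed Efar := by
      have : Efar = (fun y : EuclideanSpace ℝ (Fin d) => ‖y - o‖) ⁻¹' (Set.Ici (r + γ)) := rfl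
      rw [this]
      exact isClosed_Ici.preimage ((continuous_id.sub continuous_const).norm)
    have hEfarMeas : MeasurableSet Efar := hEfarClosed.measurableSet
    have hdistlip : LipschitzWith 1 (fun y : EuclideanSpace ℝ (Fin d) => dist y o) := LipschitzWith.dist_left o
    have hIcc : Set.Icc (r + γ) (r + δ'') ⊆ (fun y : EuclideanSpace ℝ (Fin d) => dist y o) '' (S ∩ Efar) := by
      intro t ht
      have h1 : dist y₁ o ≤ t := by
        rw [dist_eq_norm]
        exact le_trans hy₁.le ht.1
      have h2 : t ≤ dist z o := by
        rw [dist_eq_norm, hzo]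
        have : r + δ'' = δ + R := by rw [hδ''def]; ring
        rw [← this]
        exact ht.2
      obtain ⟨yt, hytS, hyteq⟩ := hSconn.isPreconnected.intermediate_value hy₁S hzS
        ((continuous_id.dist continuous_const).continuousOn :
          ContinuousOn (fun y : EuclideanSpace ℝ (Fin d) => dist y o) S)
        ⟨h1, h2⟩
      simp only [id_eq] at hyteq
      refine ⟨yt, ⟨hytS, ?_⟩, hyteq⟩
      rw [hEfardef, Set.mem_setOf_eq, ← dist_eq_norm, hyteq]
      exact ht.1
    have hslab : ENNReal.ofReal γ ≤ μH[1] (S ∩ Efar) := by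
      have hγδ'' : δ'' - γ = γ := by rw [hγdef]; ring
      calc ENNReal.ofReal γ = volume (Set.Icc (r + γ) (r + δ'')) := by
            rw [Real.volume_Icc]
            congr 1
            linarith [hγδ'']
        _ = μH[1] (Set.Icc (r + γ) (r + δ'')) := by rw [MeasureTheory.hausdorffMeasure_real]
        _ ≤ μH[1] ((fun y : EuclideanSpace ℝ (Fin d) => dist y o) '' (S ∩ Efar)) := measure_mono hIcc
        _ ≤ (1 : ℝ≥0) ^ (1:ℝ) * μH[1] (S ∩ Efar) :=
            hdistlip.hausdorffMeasure_image_le zero_le_one _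
        _ = μH[1] (S ∩ Efar) := by simp
    set κ : ℝ := r / (r + γ) with hκdef
    have hκ0 : 0 ≤ κ := by positivity
    have hκ1 : κ < 1 := by
      rw [hκdef, div_lt_one (by linarith)]
      linarith
    have hPfarlip : LipschitzOnWith (Real.toNNReal κ) P Efar := ballProj_lipschitzOnWith hr0.le hγpos
    have hA : μH[1] (P '' (S ∩ Efar)) ≤ ENNReal.ofReal κ * μH[1] (S ∩ Efar) := by
      have := (hPfarlip.mono (Set.inter_subset_right : S ∩ Efar ⊆ Efar)).hausdorffMeasure_image_le zero_le_one
      simpa [ENNReal.rpow_one, ENNReal.ofReal] using this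
    have hB : μH[1] (P '' (S \ Efar)) ≤ μH[1] (S \ Efar) := by
      have := hPlip.hausdorffMeasure_image_le zero_le_one (S \ Efar)
      simpa using this
    have hsplit : μH[1] PS ≤ μH[1] (P '' (S ∩ Efar)) + μH[1] (P '' (S \ Efar)) := by
      have : PS = P '' (S ∩ Efar) ∪ P '' (S \ Efar) := by
        rw [← Set.image_union, Set.inter_union_diff]
      rw [this]
      exact measure_union_le _ _
    have hAB : μH[1] (S ∩ Efar) + μH[1] (S \ Efar) = μH[1] S :=
      measure_inter_add_diff S hEfarMeas
    have hAfin : μH[1] (S ∩ Efar) ≠ ⊤ :=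
      (lt_of_le_of_lt (le_trans (le_trans (le_add_right le_rfl) hAB.le) hSl)
        ENNReal.ofReal_lt_top).ne
    set βr : ℝ := (1 - κ) * γ with hβrdef
    have hβrpos : 0 < βr := by
      rw [hβrdef]
      have : 0 < 1 - κ := by linarith
      positivity
    have hbudget : μH[1] PS + ENNReal.ofReal βr ≤ ENNReal.ofReal l := by
      have haγ : γ ≤ (μH[1] (S ∩ Efar)).toReal := by
        rw [← ENNReal.ofReal_le_iff_le_toReal hAfin]
        exact hslab
      have h2 : ENNReal.ofReal κ * μH[1] (S ∩ Efar) + ENNReal.ofReal βr ≤ μH[1] (S ∩ Efar) := by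
        conv_rhs => rw [← ENNReal.ofReal_toReal hAfin]
        conv_lhs => rw [← ENNReal.ofReal_toReal hAfin]
        rw [← ENNReal.ofReal_mul hκ0, ← ENNReal.ofReal_add (by positivity) hβrpos.le]
        apply ENNReal.ofReal_le_ofReal
        have htr : 0 ≤ (μH[1] (S ∩ Efar)).toReal := ENNReal.toReal_nonneg
        nlinarith
      calc μH[1] PS + ENNReal.ofReal βr
          ≤ (ENNReal.ofReal κ * μH[1] (S ∩ Efar) + ENNReal.ofReal βr) + μH[1] (S \ Efar) := by
            calc μH[1] PS + ENNReal.ofReal βr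
                ≤ (μH[1] (P '' (S ∩ Efar)) + μH[1] (P '' (S \ Efar))) + ENNReal.ofReal βr :=
                  add_le_add_left hsplit _
              _ ≤ (ENNReal.ofReal κ * μH[1] (S ∩ Efar) + μH[1] (S \ Efar)) + ENNReal.ofReal βr :=
                  add_le_add_left (add_le_add hA hB) _
              _ = (ENNReal.ofReal κ * μH[1] (S ∩ Efar) + ENNReal.ofReal βr) + μH[1] (S \ Efar) := by
                  ring
        _ ≤ μH[1] (S ∩ Efar) + μH[1] (S \ Efar) := add_le_add_left h2 _
        _ = μH[1] S := hAB
        _ ≤ ENNReal.ofReal l := hSl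
    have hΩnotPS : ¬ Ω ⊆ PS := by
      intro hsub
      have : μ Ω ≤ μ PS := measure_mono hsub
      rw [hμPS] at this
      exact absurd hΩpos (not_lt.2 this)
    obtain ⟨x₀, hx₀Ω, hx₀PS⟩ := Set.not_subset.1 hΩnotPS
    set ρ : ℝ := Metric.infDist x₀ PS with hρdef
    have hρpos : 0 < ρ := (hPScpt.isClosed.notMem_iff_infDist_pos hPSne).1 hx₀PS
    set β' : ℝ := min βr (ρ / 2) with hβ'def
    have hβ'pos : 0 < β' := lt_min hβrpos (by positivity)
    have hβ'ρ : β' ≤ ρ / 2 := min_le_right _ _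
    have hβ'βr : β' ≤ βr := min_le_left _ _
    obtain ⟨w₀, hw₀PS, hw₀d⟩ := hPScpt.exists_infDist_eq_dist hPSne x₀
    set u : EuclideanSpace ℝ (Fin d) := ρ⁻¹ • (x₀ - w₀) with hudef
    have hxw : ‖x₀ - w₀‖ = ρ := by rw [← dist_eq_norm, ← hw₀d, hρdef]
    have hu : ‖u‖ = 1 := by
      rw [hudef, norm_smul, Real.norm_eq_abs, abs_of_nonneg (by positivity), hxw]
      field_simp
    set φseg : ℝ → EuclideanSpace ℝ (Fin d) := fun t => w₀ + t • u with hφsegdef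
    have hφlip : LipschitzWith 1 φseg := by
      apply LipschitzWith.of_dist_le_mul
      intro s t
      simp only [NNReal.coe_one, one_mul, hφsegdef, dist_eq_norm]
      have : w₀ + s • u - (w₀ + t • u) = (s - t) • u := by
        rw [sub_smul]; abel
      rw [this, norm_smul, Real.norm_eq_abs, hu, mul_one]
    set seg : Set (EuclideanSpace ℝ (Fin d)) := φseg '' Set.Icc 0 β' with hsegdef
    have hsegconn : IsConnected seg :=
      (isConnected_Icc hβ'pos.le).image _ hφlip.continuous.continuousOn
    have hsegcpt : IsCompact seg := isCompact_Icc.image hφlip.continuous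
    have hw₀seg : w₀ ∈ seg := ⟨0, ⟨le_refl 0, hβ'pos.le⟩, by simp [hφsegdef]⟩
    have hsegH : μH[1] seg ≤ ENNReal.ofReal β' := by
      calc μH[1] seg ≤ (1 : ℝ≥0) ^ (1:ℝ) * μH[1] (Set.Icc (0:ℝ) β') :=
            hφlip.hausdorffMeasure_image_le zero_le_one _
        _ = μH[1] (Set.Icc (0:ℝ) β') := by simp
        _ = volume (Set.Icc (0:ℝ) β') := by rw [MeasureTheory.hausdorffMeasure_real]
        _ = ENNReal.ofReal β' := by rw [Real.volume_Icc, sub_zero]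
    set T : Set (EuclideanSpace ℝ (Fin d)) := PS ∪ seg with hTdef
    have hTcpt : IsCompact T := hPScpt.union hsegcpt
    have hTconn : IsConnected T := hPSconn.union ⟨w₀, hw₀PS, hw₀seg⟩ hsegconn
    have hTH : μH[1] T ≤ ENNReal.ofReal l := by
      calc μH[1] T ≤ μH[1] PS + μH[1] seg := measure_union_le _ _
        _ ≤ μH[1] PS + ENNReal.ofReal β' := add_le_add_right hsegH _
        _ ≤ μH[1] PS + ENNReal.ofReal βr :=
            add_le_add_right (ENNReal.ofReal_le_ofReal hβ'βr) _
        _ ≤ ENNReal.ofReal l := hbudget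
    have hTmin := hmin T hTcpt hTconn hTH
    have hhint : Integrable (fun x : EuclideanSpace ℝ (Fin d) => Metric.infDist x T ^ p) μ :=
      integrable_of_compact_compl_null hK₀c hK₀n
        ((Metric.continuous_infDist_pt T).rpow_const (fun x => Or.inr hppos.le))
    set x₁ : EuclideanSpace ℝ (Fin d) := φseg β' with hx₁def
    have hx₁T : x₁ ∈ T := Or.inr ⟨β', ⟨hβ'pos.le, le_refl _⟩, rfl⟩
    have hx₀x₁ : dist x₀ x₁ = ρ - β' := by
      have hxw' : x₀ - w₀ = ρ • u := by
        rw [hudef, smul_smul, mul_inv_cancel₀ hρpos.ne', one_smul]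
      have : x₀ - x₁ = (ρ - β') • u := by
        rw [hx₁def, hφsegdef]
        simp only
        rw [sub_smul, ← hxw']
        abel
      rw [dist_eq_norm, this, norm_smul, Real.norm_eq_abs, hu, mul_one,
        abs_of_nonneg (by linarith)]
    set ν : ℝ := β' / 4 with hνdef
    have hνpos : 0 < ν := by positivity
    have hE₀pos : 0 < μ (Metric.ball x₀ ν ∩ Ω) := by
      have hball : 0 < μ (Metric.ball x₀ ν) :=
        hx₀Ω (Metric.ball x₀ ν) Metric.isOpen_ball (Metric.mem_ball_self hνpos)
      by_contra h
      push_neg at h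
      have h0 : μ (Metric.ball x₀ ν ∩ Ω) = 0 := le_antisymm h zero_le
      have : μ (Metric.ball x₀ ν) ≤ μ (Metric.ball x₀ ν ∩ Ω) + μ Ωᶜ := by
        refine le_trans (measure_mono ?_) (measure_union_le _ _)
        intro x hx
        by_cases hxΩ : x ∈ Ω
        · exact Or.inl ⟨hx, hxΩ⟩
        · exact Or.inr hxΩ
      rw [h0, hΩcompl] at this
      simp at this
      exact absurd hball (by rw [this]; exact lt_irrefl 0)
    refine int_contradiction hgint hhint hΩcompl ?_ (E₀ := Metric.ball x₀ ν ∩ Ω) hE₀pos ?_ hTmin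
    · intro x hx
      rw [Set.notMem_compl_iff] at hx
      apply Real.rpow_le_rpow Metric.infDist_nonneg _ hppos.le
      calc Metric.infDist x T ≤ Metric.infDist x PS :=
            Metric.infDist_le_infDist_of_subset Set.subset_union_left hPSne
        _ ≤ Metric.infDist x S := hproj x hx
    · intro x hx hxc
      rw [Set.notMem_compl_iff] at hxc
      obtain ⟨hxball, hxΩ⟩ := hx
      apply Real.rpow_lt_rpow Metric.infDist_nonneg _ hppos
      have hxd : dist x x₀ < ν := by
        rw [Metric.mem_ball] at hxball
        exact hxball
      have hup : Metric.infDist x T < ρ - ν := by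
        calc Metric.infDist x T ≤ dist x x₁ := Metric.infDist_le_dist_of_mem hx₁T
          _ ≤ dist x x₀ + dist x₀ x₁ := dist_triangle _ _ _
          _ < ν + (ρ - β') := by rw [hx₀x₁]; linarith
          _ ≤ ρ - ν := by
            rw [hνdef]
            linarith
      have hlow : ρ - ν < Metric.infDist x S := by
        have h1 : Metric.infDist x₀ PS ≤ Metric.infDist x PS + dist x₀ x :=
          Metric.infDist_le_infDist_add_dist
        have h2 : Metric.infDist x PS ≤ Metric.infDist x S := hproj x hxΩ
        rw [← hρdef] at h1
        rw [dist_comm] at h1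
        linarith
      linarith
end
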